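/- arXiv:1511.04135 — 6 statements merged into one kernel-verified Lean document; each statement's English description precedes it below -/
import Mathlib

section
/- For I ⊆ J finitary subsets of S, in the Hecke algebra H_q over Z[q] one has x_J = h·x_I where h = Σ_{w : w⁻¹ ∈ D_I ∩ W_J} T_w, D_I being the set of minimal-length right coset representatives of W_I in W. In particular x_J H_q ⊆ x_I H_q. -/
open Polynomial

/-- A realization of the Hecke algebra of the Coxeter system `cs` over a commutative
ring `R` with parameter `qR`. -/
structure HeckeAlgebraData {B W : Type} [Group W] {M : CoxeterMatrix B}
    (cs : CoxeterSystem M W) (R : Type) [CommRing R] (qR : R)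
    (H : Type) [Ring H] [Algebra R H] where
  T : Module.Basis W R H
  T_one : T 1 = 1
  T_mul_of_lt : ∀ (i : B) (w : W), cs.length (cs.simple i * w) < cs.length w →
    T (cs.simple i) * T w = (qR - 1) • T w + qR • T (cs.simple i * w)
  T_mul_of_gt : ∀ (i : B) (w : W), cs.length w < cs.length (cs.simple i * w) →
    T (cs.simple i) * T w = T (cs.simple i * w)

/-!
Every `w ∈ W_J` factors uniquely as `w = d * u` with `u ∈ W_I` and `d⁻¹` of minimal length in
its coset `W_I d⁻¹`. Lengths add in such a factorization, so `T_d * T_u = T_w`, and summing over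
`W_J` gives `x_J = h * x_I`. The mirror factorization `w = u * d` with `d ∈ D_I ∩ W_J` gives
`x_J = x_I * ∑ T_d`, whence `x_J H ⊆ x_I H`.

That a minimal coset representative `d` satisfies `ℓ (u d) = ℓ u + ℓ d` for all `u ∈ W_I` rests
on the exchange condition, which comes from Tits's action of `W` on `W × ℤ/2`, where `s_i` sends
`(t, ε)` to `(s_i t s_i, ε + [t = s_i])`. Because this is an action of `W`, the parity of the
number of occurrences of a reflection `t` in the inversion sequence of a word depends only on
the product of the word; for a reduced word that number is at most one.
-/

namespace CoxeterSystem

variable {B W : Type*} [Group W] {M : CoxeterMatrix B} (cs : CoxeterSystem M W)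

local prefix:100 "s " => cs.simple
local prefix:100 "π " => cs.wordProd
local prefix:100 "ℓ " => cs.length
local prefix:100 "ris " => cs.rightInvSeq
local prefix:100 "lis " => cs.leftInvSeq

theorem _root_.mul_mul_inv_eq_iff_eq_inv_mul_mul {G : Type*} [Group G] (g x y : G) :
    g * x * g⁻¹ = y ↔ x = g⁻¹ * y * g := by
  constructor <;> rintro rfl <;> group

theorem simple_mul_mul_simple_eq_iff (i : B) (x y : W) :
    s i * x * s i = y ↔ x = s i * y * s i := by
  simpa only [inv_simple] using mul_mul_inv_eq_iff_eq_inv_mul_mul (s i) x y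

theorem semiconjBy_simple_mul_simple (i j : B) :
    SemiconjBy (s j) (s i * s j) (s i * s j)⁻¹ := by
  simp [SemiconjBy, mul_assoc]

section TitsRepresentation

variable [DecidableEq W]

def titsFun (i : B) (p : W × ZMod 2) : W × ZMod 2 :=
  (s i * p.1 * s i, p.2 + if p.1 = s i then 1 else 0)

theorem titsFun_involutive (i : B) : Function.Involutive (cs.titsFun i) := by
  rintro ⟨t, ε⟩
  refine Prod.ext (by simp [titsFun, mul_assoc]) ?_
  simp only [titsFun, simple_mul_mul_simple_eq_iff, simple_mul_simple_self, one_mul,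
    add_assoc, CharTwo.add_self_eq_zero, add_zero]

def titsPerm (i : B) : Equiv.Perm (W × ZMod 2) := (cs.titsFun_involutive i).toPerm

@[simp] theorem titsPerm_apply (i : B) (p : W × ZMod 2) :
    cs.titsPerm i p = (s i * p.1 * s i, p.2 + if p.1 = s i then 1 else 0) := rfl

theorem titsPerm_mul_pow_apply (i j : B) (k : ℕ) (t : W) (ε : ZMod 2) :
    ((cs.titsPerm i * cs.titsPerm j) ^ k) (t, ε) =
      ((s i * s j) ^ k * t * ((s i * s j) ^ k)⁻¹,
        ε + ∑ n ∈ Finset.range (2 * k), if t = (s i * s j)⁻¹ ^ n * s j then 1 else 0) := by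
  induction k with
  | zero => simp
  | succ k ih =>
    have hsemi := (cs.semiconjBy_simple_mul_simple i j).pow_right k
    have hconj₁ : ((s i * s j) ^ k)⁻¹ * s j * (s i * s j) ^ k
        = (s i * s j)⁻¹ ^ (2 * k) * s j := by
      rw [mul_assoc, hsemi.eq, ← mul_assoc, ← inv_pow, ← pow_add, two_mul]
    have hconj₂ : ((s i * s j) ^ k)⁻¹ * (s j * s i * s j) * (s i * s j) ^ k
        = (s i * s j)⁻¹ ^ (2 * k + 1) * s j := by
      have : s j * s i * s j = (s i * s j)⁻¹ * s j := by simp [mul_assoc]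
      rw [this, mul_assoc, mul_assoc, hsemi.eq, ← mul_assoc, ← mul_assoc, ← inv_pow,
        ← pow_succ, ← pow_add]
      ring_nf
    rw [pow_succ', Equiv.Perm.mul_apply, Equiv.Perm.mul_apply, ih]
    simp only [titsPerm_apply, simple_mul_mul_simple_eq_iff, mul_mul_inv_eq_iff_eq_inv_mul_mul,
      hconj₁, hconj₂, Nat.mul_succ, Finset.sum_range_succ]
    refine Prod.ext ?_ ?_
    · simp [pow_succ', mul_assoc]
    · dsimp only
      abel

theorem isLiftable_titsPerm : M.IsLiftable cs.titsPerm := by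
  intro i j
  ext ⟨t, ε⟩
  · rw [titsPerm_mul_pow_apply, simple_mul_simple_pow]
    simp
  · rw [titsPerm_mul_pow_apply, two_mul, Finset.sum_range_add]
    have hperiod : (s i * s j)⁻¹ ^ M i j = 1 := by rw [inv_pow, simple_mul_simple_pow, inv_one]
    simp only [pow_add, hperiod, one_mul, CharTwo.add_self_eq_zero, add_zero,
      Equiv.Perm.coe_one, id_eq]

def titsRep : W →* Equiv.Perm (W × ZMod 2) := cs.lift ⟨cs.titsPerm, cs.isLiftable_titsPerm⟩

theorem titsRep_wordProd_apply (ω : List B) (t : W) (ε : ZMod 2) :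
    cs.titsRep (π ω) (t, ε) = (π ω * t * (π ω)⁻¹, ε + ((ris ω).count t : ZMod 2)) := by
  induction ω with
  | nil => simp
  | cons i ω ih =>
    rw [wordProd_cons, map_mul, Equiv.Perm.mul_apply, ih, titsRep, lift_apply_simple,
      titsPerm_apply]
    refine Prod.ext (by simp [mul_assoc]) ?_
    have hris : ris (i :: ω) = (π ω)⁻¹ * s i * π ω :: ris ω := rfl
    simp only [hris, List.count_cons, beq_iff_eq, Nat.cast_add, Nat.cast_ite, Nat.cast_one,
      Nat.cast_zero, add_assoc, eq_comm (b := t), mul_mul_inv_eq_iff_eq_inv_mul_mul]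

theorem mem_rightInvSeq_iff_of_wordProd_eq {ω ω' : List B} (hω : cs.IsReduced ω)
    (hω' : cs.IsReduced ω') (h : π ω = π ω') (t : W) : t ∈ ris ω ↔ t ∈ ris ω' := by
  have hparity := congrArg (fun g => (cs.titsRep g (t, 0)).2) h
  simp only [titsRep_wordProd_apply, zero_add, ZMod.natCast_eq_natCast_iff'] at hparity
  have h₁ := List.nodup_iff_count_le_one.mp hω.nodup_rightInvSeq t
  have h₂ := List.nodup_iff_count_le_one.mp hω'.nodup_rightInvSeq t
  rw [← List.count_pos_iff, ← List.count_pos_iff]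
  omega

end TitsRepresentation

theorem simple_mem_rightInvSeq_of_isRightDescent {ω : List B} (hω : cs.IsReduced ω) {i : B}
    (h : cs.IsRightDescent (π ω) i) : s i ∈ ris ω := by
  classical
  obtain ⟨ω', hω', hprod⟩ := cs.exists_isReduced (π ω * s i)
  have hprod' : π (ω'.concat i) = π ω := by
    rw [wordProd_concat, ← hprod, simple_mul_simple_cancel_right]
  have hred : cs.IsReduced (ω'.concat i) := by
    rw [IsReduced, hprod', List.length_concat, ← hω'.eq, ← hprod]
    exact ((cs.isRightDescent_iff).mp h).symm
  rw [cs.mem_rightInvSeq_iff_of_wordProd_eq hω hred hprod'.symm, rightInvSeq_concat]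
  simp

theorem simple_mem_leftInvSeq_of_isLeftDescent {ω : List B} (hω : cs.IsReduced ω) {i : B}
    (h : cs.IsLeftDescent (π ω) i) : s i ∈ lis ω := by
  have hdesc : cs.IsRightDescent (π ω.reverse) i := by
    rwa [wordProd_reverse, isRightDescent_inv_iff]
  have := cs.simple_mem_rightInvSeq_of_isRightDescent ((cs.isReduced_reverse_iff ω).mpr hω) hdesc
  rwa [rightInvSeq_reverse, List.mem_reverse] at this

theorem exists_eraseIdx_of_isLeftDescent {ω : List B} (hω : cs.IsReduced ω) {i : B}
    (h : cs.IsLeftDescent (π ω) i) : ∃ j < ω.length, s i * π ω = π (ω.eraseIdx j) := by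
  obtain ⟨j, hj, hget⟩ := List.mem_iff_getElem.mp (cs.simple_mem_leftInvSeq_of_isLeftDescent hω h)
  rw [length_leftInvSeq] at hj
  refine ⟨j, hj, ?_⟩
  rw [← getD_leftInvSeq_mul_wordProd, List.getD_eq_getElem _ _ (by simpa using hj), hget]

theorem exists_isReduced_subset (ω : List B) :
    ∃ ω' : List B, cs.IsReduced ω' ∧ ω' ⊆ ω ∧ π ω' = π ω := by
  induction ω with
  | nil => exact ⟨[], by simp [IsReduced], List.Subset.refl _, rfl⟩
  | cons i ω ih =>
    obtain ⟨ω', hred, hsub, hprod⟩ := ih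
    rw [wordProd_cons, ← hprod]
    by_cases hdesc : cs.IsLeftDescent (π ω') i
    · obtain ⟨j, hj, hexch⟩ := cs.exists_eraseIdx_of_isLeftDescent hred hdesc
      refine ⟨ω'.eraseIdx j, ?_,
        fun x hx => List.mem_cons_of_mem i (hsub (List.eraseIdx_subset hx)), hexch.symm⟩
      have := (cs.isLeftDescent_iff).mp hdesc
      rw [IsReduced, ← hexch, List.length_eraseIdx_of_lt hj]
      rw [hred.eq] at this
      omega
    · refine ⟨i :: ω', ?_, List.cons_subset_cons i hsub, wordProd_cons ..⟩
      rw [IsReduced, wordProd_cons, (cs.not_isLeftDescent_iff).mp hdesc, hred.eq, List.length_cons]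

theorem wordProd_mem_closure {S : Set B} {ω : List B} (hω : ∀ x ∈ ω, x ∈ S) :
    π ω ∈ Subgroup.closure (cs.simple '' S) :=
  Subgroup.list_prod_mem _ fun _ hx =>
    let ⟨i, hi, hx⟩ := List.mem_map.mp hx
    hx ▸ Subgroup.subset_closure (Set.mem_image_of_mem _ (hω i hi))

theorem exists_isReduced_of_mem_closure {S : Set B} {u : W}
    (hu : u ∈ Subgroup.closure (cs.simple '' S)) :
    ∃ ω : List B, cs.IsReduced ω ∧ (∀ x ∈ ω, x ∈ S) ∧ π ω = u := by
  have hword : ∃ ω : List B, (∀ x ∈ ω, x ∈ S) ∧ π ω = u := by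
    induction hu using Subgroup.closure_induction with
    | mem x hx =>
      obtain ⟨i, hi, rfl⟩ := hx
      exact ⟨[i], by simpa using hi, wordProd_singleton ..⟩
    | one => exact ⟨[], by simp, wordProd_nil ..⟩
    | mul x y _ _ hx hy =>
      obtain ⟨ω₁, h₁, rfl⟩ := hx
      obtain ⟨ω₂, h₂, rfl⟩ := hy
      exact ⟨ω₁ ++ ω₂, fun z hz => (List.mem_append.mp hz).elim (h₁ z) (h₂ z),
        wordProd_append ..⟩
    | inv x _ hx =>
      obtain ⟨ω, h, rfl⟩ := hx
      exact ⟨ω.reverse, fun z hz => h z (List.mem_reverse.mp hz), wordProd_reverse ..⟩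
  obtain ⟨ω, hS, rfl⟩ := hword
  obtain ⟨ω', hred, hsub, hprod⟩ := cs.exists_isReduced_subset ω
  exact ⟨ω', hred, fun x hx => hS x (hsub hx), hprod⟩

theorem exists_eraseIdx_of_isLeftDescent_append {ω ω' : List B} (h : cs.IsReduced (ω ++ ω'))
    {i : B} (hdesc : cs.IsLeftDescent (π (ω ++ ω')) i) :
    (∃ j < ω.length, s i * π ω = π (ω.eraseIdx j)) ∨
      ∃ j < ω'.length, s i * π ω * π ω' = π ω * π (ω'.eraseIdx j) := by
  obtain ⟨j, hj, hexch⟩ := cs.exists_eraseIdx_of_isLeftDescent h hdesc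
  rw [wordProd_append, ← mul_assoc] at hexch
  rcases lt_or_ge j ω.length with hjω | hjω
  · rw [List.eraseIdx_append_of_lt_length hjω, wordProd_append] at hexch
    exact Or.inl ⟨j, hjω, mul_right_cancel hexch⟩
  · rw [List.eraseIdx_append_of_length_le hjω, wordProd_append] at hexch
    rw [List.length_append] at hj
    exact Or.inr ⟨j - ω.length, by omega, hexch⟩

def IsDistinguished (P : Subgroup W) (d : W) : Prop := ∀ u ∈ P, ℓ (u * d) = ℓ u + ℓ d

theorem isDistinguished_of_forall_length_le {S : Set B} {d : W}
    (hmin : ∀ v ∈ Subgroup.closure (cs.simple '' S), ℓ d ≤ ℓ (v * d)) :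
    cs.IsDistinguished (Subgroup.closure (cs.simple '' S)) d := by
  obtain ⟨ωd, hωd, rfl⟩ := cs.exists_isReduced d
  suffices h : ∀ ω : List B, cs.IsReduced ω → (∀ x ∈ ω, x ∈ S) →
      ℓ (π ω * π ωd) = ω.length + ℓ (π ωd) by
    intro u hu
    obtain ⟨ω, hω, hS, rfl⟩ := cs.exists_isReduced_of_mem_closure hu
    rw [h ω hω hS, hω.eq]
  intro ω hω hS
  induction ω with
  | nil => simp
  | cons i ω ih =>
    have hωS : ∀ x ∈ ω, x ∈ S := fun x hx => hS x (List.mem_cons_of_mem i hx)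
    have ihω := ih (by simpa using hω.drop 1) hωS
    rw [wordProd_cons, mul_assoc, List.length_cons]
    by_cases hdesc : cs.IsLeftDescent (π ω * π ωd) i
    · exfalso
      have happ : cs.IsReduced (ω ++ ωd) := by
        rw [IsReduced, wordProd_append, ihω, hωd.eq, List.length_append]
      rw [← wordProd_append] at hdesc
      -- `s i` cancels a letter of `ω`, impossible as `i :: ω` is reduced, or a letter of `ωd`,
      -- which yields an element of the coset shorter than `π ωd`.
      rcases cs.exists_eraseIdx_of_isLeftDescent_append happ hdesc with
        ⟨j, hj, hexch⟩ | ⟨j, hj, hexch⟩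
      · have := cs.length_wordProd_le (ω.eraseIdx j)
        rw [← hexch, ← wordProd_cons, hω.eq, List.length_eraseIdx_of_lt hj] at this
        simp only [List.length_cons] at this
        omega
      · have hv : (π ω)⁻¹ * s i * π ω ∈ Subgroup.closure (cs.simple '' S) := by
          have hsi : s i ∈ Subgroup.closure (cs.simple '' S) :=
            Subgroup.subset_closure (Set.mem_image_of_mem _ (hS i List.mem_cons_self))
          have hω := cs.wordProd_mem_closure hωS
          exact mul_mem (mul_mem (inv_mem hω) hsi) hω
        have hvd : (π ω)⁻¹ * s i * π ω * π ωd = π (ωd.eraseIdx j) := by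
          simp only [mul_assoc] at hexch ⊢
          rw [hexch, inv_mul_cancel_left]
        have := hmin _ hv
        rw [hvd, hωd.eq] at this
        have := cs.length_wordProd_le (ωd.eraseIdx j)
        rw [List.length_eraseIdx_of_lt hj] at this
        omega
    · rw [(cs.not_isLeftDescent_iff).mp hdesc, ihω]
      ring

theorem exists_isDistinguished_mul_eq (S : Set B) (w : W) :
    ∃ u ∈ Subgroup.closure (cs.simple '' S), ∃ d,
      cs.IsDistinguished (Subgroup.closure (cs.simple '' S)) d ∧ u * d = w := by
  set P := Subgroup.closure (cs.simple '' S)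
  let u₀ := Function.argminOn (fun u => ℓ (u * w)) (P : Set W) ⟨1, P.one_mem⟩
  have hu₀ : u₀ ∈ P := Function.argminOn_mem _ _ _
  refine ⟨u₀⁻¹, inv_mem hu₀, u₀ * w, cs.isDistinguished_of_forall_length_le fun v hv => ?_,
    inv_mul_cancel_left _ _⟩
  rw [← mul_assoc]
  exact Function.argminOn_le (fun u => ℓ (u * w)) (P : Set W) (mul_mem hv hu₀)

variable {cs} in
theorem IsDistinguished.eq_of_mul_eq_mul {P : Subgroup W} {u₁ u₂ d₁ d₂ : W}
    (hd₁ : cs.IsDistinguished P d₁) (hd₂ : cs.IsDistinguished P d₂) (hu₁ : u₁ ∈ P) (hu₂ : u₂ ∈ P)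
    (h : u₁ * d₁ = u₂ * d₂) : u₁ = u₂ ∧ d₁ = d₂ := by
  have hv : u₂⁻¹ * u₁ ∈ P := mul_mem (inv_mem hu₂) hu₁
  have h₁ : u₂⁻¹ * u₁ * d₁ = d₂ := by rw [mul_assoc, h, inv_mul_cancel_left]
  have h₂ : (u₂⁻¹ * u₁)⁻¹ * d₂ = d₁ := by rw [← h₁, inv_mul_cancel_left]
  have e₁ := hd₁ _ hv
  have e₂ := hd₂ _ (inv_mem hv)
  rw [h₁] at e₁
  rw [h₂, length_inv] at e₂
  have hv1 : u₂⁻¹ * u₁ = 1 := cs.length_eq_zero_iff.mp (by omega)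
  rw [hv1, one_mul] at h₁
  exact ⟨(inv_mul_eq_one.mp hv1).symm, h₁⟩

variable {cs} in
theorem IsDistinguished.length_mul_of_inv {P : Subgroup W} {d u : W}
    (hd : cs.IsDistinguished P d⁻¹) (hu : u ∈ P) : ℓ (d * u) = ℓ d + ℓ u := by
  rw [← cs.length_inv, mul_inv_rev, hd _ (inv_mem hu), cs.length_inv, cs.length_inv, add_comm]

theorem bijOn_mul_isDistinguished {S : Set B} {Q : Subgroup W}
    (hSQ : Subgroup.closure (cs.simple '' S) ≤ Q) :
    Set.BijOn (fun p : W × W => p.1 * p.2)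
      ((Subgroup.closure (cs.simple '' S) : Set W) ×ˢ
        {d | cs.IsDistinguished (Subgroup.closure (cs.simple '' S)) d ∧ d ∈ Q}) Q := by
  refine ⟨fun p hp => Q.mul_mem (hSQ hp.1) hp.2.2, ?_, fun w hw => ?_⟩
  · rintro ⟨u₁, d₁⟩ ⟨hu₁, hd₁, -⟩ ⟨u₂, d₂⟩ ⟨hu₂, hd₂, -⟩ h
    obtain ⟨rfl, rfl⟩ := hd₁.eq_of_mul_eq_mul hd₂ hu₁ hu₂ h
    rfl
  · obtain ⟨u, hu, d, hd, rfl⟩ := cs.exists_isDistinguished_mul_eq S w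
    refine ⟨(u, d), ⟨hu, hd, ?_⟩, rfl⟩
    simpa using Q.mul_mem (Q.inv_mem (hSQ hu)) hw

theorem bijOn_mul_of_isDistinguished_inv {S : Set B} {Q : Subgroup W}
    (hSQ : Subgroup.closure (cs.simple '' S) ≤ Q) :
    Set.BijOn (fun p : W × W => p.1 * p.2)
      ({d | cs.IsDistinguished (Subgroup.closure (cs.simple '' S)) d⁻¹ ∧ d ∈ Q} ×ˢ
        (Subgroup.closure (cs.simple '' S) : Set W)) Q := by
  refine ⟨fun p hp => Q.mul_mem hp.1.2 (hSQ hp.2), ?_, fun w hw => ?_⟩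
  · rintro ⟨d₁, u₁⟩ ⟨⟨hd₁, -⟩, hu₁⟩ ⟨d₂, u₂⟩ ⟨⟨hd₂, -⟩, hu₂⟩ h
    have h' : u₁⁻¹ * d₁⁻¹ = u₂⁻¹ * d₂⁻¹ := by
      simpa only [mul_inv_rev] using congrArg (·⁻¹) h
    obtain ⟨hu, hd⟩ := hd₁.eq_of_mul_eq_mul hd₂ (inv_mem hu₁) (inv_mem hu₂) h'
    rw [inv_inj] at hu hd
    exact Prod.ext hd hu
  · obtain ⟨u, hu, d, hd, hw'⟩ := cs.exists_isDistinguished_mul_eq S w⁻¹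
    refine ⟨(d⁻¹, u⁻¹), ⟨⟨by rwa [inv_inv], ?_⟩, inv_mem hu⟩, ?_⟩
    · have hd' : d⁻¹ = w * u := by rw [← inv_inv w, ← hw']; group
      exact hd' ▸ Q.mul_mem hw (hSQ hu)
    · simp [← mul_inv_rev, hw']

end CoxeterSystem

namespace HeckeAlgebraData

variable {B W : Type} [Group W] {M : CoxeterMatrix B} {cs : CoxeterSystem M W} {R : Type}
  [CommRing R] {qR : R} {H : Type} [Ring H] [Algebra R H] (hd : HeckeAlgebraData cs R qR H)

theorem T_wordProd_mul {ω : List B} {w : W}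
    (h : cs.length (cs.wordProd ω * w) = ω.length + cs.length w) :
    hd.T (cs.wordProd ω * w) = (ω.map (hd.T ∘ cs.simple)).prod * hd.T w := by
  induction ω with
  | nil => simp
  | cons i ω ih =>
    rw [cs.wordProd_cons, mul_assoc, List.length_cons] at h
    have hle := cs.length_mul_le (cs.wordProd ω) w
    have hle' := cs.length_wordProd_le ω
    have hsi := cs.length_mul_le (cs.simple i) (cs.wordProd ω * w)
    rw [cs.length_simple] at hsi
    rw [cs.wordProd_cons, mul_assoc, ← hd.T_mul_of_gt i _ (by omega), ih (by omega),
      List.map_cons, List.prod_cons, Function.comp_apply, mul_assoc]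

theorem T_mul_T {v w : W} (h : cs.length (v * w) = cs.length v + cs.length w) :
    hd.T v * hd.T w = hd.T (v * w) := by
  obtain ⟨ω, hω, rfl⟩ := cs.exists_isReduced v
  have hv : hd.T (cs.wordProd ω) = (ω.map (hd.T ∘ cs.simple)).prod := by
    simpa [hd.T_one] using hd.T_wordProd_mul (w := 1) (by simpa using hω.eq)
  rw [hv, hd.T_wordProd_mul (by rw [h, hω.eq])]

theorem sum_T_mul_sum_T {A C S : Finset W}
    (hadd : ∀ a ∈ A, ∀ c ∈ C, cs.length (a * c) = cs.length a + cs.length c)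
    (hbij : Set.BijOn (fun p : W × W => p.1 * p.2) ((A : Set W) ×ˢ (C : Set W)) S) :
    (∑ a ∈ A, hd.T a) * (∑ c ∈ C, hd.T c) = ∑ w ∈ S, hd.T w := by
  rw [Finset.sum_mul_sum, ← Finset.sum_product']
  rw [← Finset.coe_product] at hbij
  refine Finset.sum_nbij (fun p : W × W => p.1 * p.2) hbij.mapsTo hbij.injOn hbij.surjOn ?_
  rintro ⟨a, c⟩ hp
  rw [Finset.mem_product] at hp
  exact hd.T_mul_T (hadd a hp.1 c hp.2)

end HeckeAlgebraData

/-- For finitary `I ⊆ J ⊆ S`, in the Hecke algebra over `ℤ[q]` one has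
`x_J = h·x_I` where `h = Σ_{w : w⁻¹ ∈ D_I ∩ W_J} T_w`, `D_I` being the set of
distinguished (minimal-length) right coset representatives of `W_I` in `W`.
In particular `x_J H_q ⊆ x_I H_q`. -/
theorem stmt2 {B W : Type} [Group W] {M : CoxeterMatrix B} (cs : CoxeterSystem M W)
    (H : Type) [Ring H] [Algebra (Polynomial ℤ) H]
    (hd : HeckeAlgebraData cs (Polynomial ℤ) X H)
    (I J : Set B) (hIJ : I ⊆ J)
    (WI : Subgroup W) (hWI : WI = Subgroup.closure (cs.simple '' I))
    (WJ : Subgroup W) (hWJ : WJ = Subgroup.closure (cs.simple '' J))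
    (hfinI : Set.Finite (WI : Set W)) (hfinJ : Set.Finite (WJ : Set W))
    -- `D_I`: the distinguished right coset representatives of `W_I` in `W`
    (DI : Set W) (hDI : DI = {w : W | ∀ u ∈ WI, cs.length (u * w) = cs.length u + cs.length w})
    (hfinh : Set.Finite {w : W | w⁻¹ ∈ DI ∧ w ∈ WJ}) :
    (∑ w ∈ hfinJ.toFinset, hd.T w)
        = (∑ w ∈ hfinh.toFinset, hd.T w) * (∑ w ∈ hfinI.toFinset, hd.T w) ∧
      ∀ a : H, ∃ b : H,
        (∑ w ∈ hfinJ.toFinset, hd.T w) * a = (∑ w ∈ hfinI.toFinset, hd.T w) * b := by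
  subst hWI hWJ hDI
  have hle : Subgroup.closure (cs.simple '' I) ≤ Subgroup.closure (cs.simple '' J) :=
    Subgroup.closure_mono (Set.image_mono hIJ)
  have hfinD : Set.Finite {d | cs.IsDistinguished (Subgroup.closure (cs.simple '' I)) d ∧
      d ∈ Subgroup.closure (cs.simple '' J)} := hfinJ.subset fun _ h => h.2
  refine ⟨?_, fun a => ⟨(∑ w ∈ hfinD.toFinset, hd.T w) * a, ?_⟩⟩
  · refine (hd.sum_T_mul_sum_T ?_ ?_).symm
    · simp only [Set.Finite.mem_toFinset]
      exact fun d hdD u hu => CoxeterSystem.IsDistinguished.length_mul_of_inv hdD.1 hu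
    · rw [Set.Finite.coe_toFinset, Set.Finite.coe_toFinset, Set.Finite.coe_toFinset]
      exact cs.bijOn_mul_of_isDistinguished_inv hle
  · rw [← mul_assoc, hd.sum_T_mul_sum_T]
    · simp only [Set.Finite.mem_toFinset]
      exact fun u hu d hdD => hdD.1 u hu
    · rw [Set.Finite.coe_toFinset, Set.Finite.coe_toFinset, Set.Finite.coe_toFinset]
      exact cs.bijOn_mul_isDistinguished hle
end

section
/- In the Hecke algebra of the infinite dihedral group with generators x_1 = T_1+1 and x_2 = T_2+1, the elements x^{(m)}_{(2,1)} = 1 + Σ_{i=1}^{m−1}(T_{[i]1} + T_{[i]2}) + T_{[m]1} satisfy the recursion x^{(m)}_{(2,1)} = x^{(m−2)}_{(2,1)}(x_2 x_1 − 2q) − q² x^{(m−4)}_{(2,1)} for m ≥ 5, where T_{[i]1} = ⋯T_2T_1 (i factors, ending in T_1) and T_{[i]2} = ⋯T_1T_2 (i factors, ending in T_2). -/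
/-
Write `x₁ = T₁ + 1`, `x₂ = T₂ + 1` and `w_i = T_{[i]2}`. Telescoping the definition gives
`x^{(m)}_{(2,1)} = (w₀ + ⋯ + w_{m-1}) x₁` for `m ≥ 1`. Since `w_{i+2} = w_i T₁T₂`, the recursion
reduces, term by term, to the identity `T₁T₂T₁T₂ x₁ = T₁T₂ x₁ (x₂x₁ − 2q) − q² x₁` together with
the initial identity `(w₀ + w₁ + w₂ + w₃) x₁ = (w₀ + w₁) x₁ (x₂x₁ − 2q)`; both follow from the
quadratic relations, which say `Tᵢ xᵢ = q xᵢ`.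
-/

open Polynomial Finset

/-- `altPair a b n = (T_{[n]a}, T_{[n]b})`: the pair of alternating products of `n`
factors from `{a, b}`, ending in `a` (resp. in `b`). -/
def altPair {A : Type} [Ring A] (a b : A) : ℕ → A × A
  | 0 => (1, 1)
  | n + 1 => ((altPair a b n).2 * a, (altPair a b n).1 * b)

/-- `xword T1 T2 m = x^{(m)}_{(2,1)} = 1 + Σ_{i=1}^{m−1}(T_{[i]1} + T_{[i]2}) + T_{[m]1}`. -/
def xword {A : Type} [Ring A] (T1 T2 : A) (m : ℕ) : A :=
  1 + (∑ i ∈ Finset.Icc 1 (m - 1), ((altPair T1 T2 i).1 + (altPair T1 T2 i).2))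
    + (altPair T1 T2 m).1

section Words

variable {A : Type} [Ring A] (a b : A)

theorem altPair_succ_fst (n : ℕ) : (altPair a b (n + 1)).1 = (altPair a b n).2 * a := rfl

theorem altPair_snd_add_two (n : ℕ) :
    (altPair a b (n + 2)).2 = (altPair a b n).2 * (a * b) := by
  simp [altPair, mul_assoc]

theorem commute_altPair {q : A} (ha : Commute q a) (hb : Commute q b) (n : ℕ) :
    Commute q (altPair a b n).1 ∧ Commute q (altPair a b n).2 := by
  induction n with
  | zero => exact ⟨Commute.one_right q, Commute.one_right q⟩
  | succ n ih => exact ⟨ih.2.mul_right ha, ih.1.mul_right hb⟩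

theorem xword_succ_succ (k : ℕ) :
    xword a b (k + 2) = xword a b (k + 1) + (altPair a b (k + 1)).2 * (a + 1) := by
  rw [xword, xword, show k + 2 - 1 = k + 1 from rfl, Nat.add_sub_cancel,
    sum_Icc_succ_top (Nat.le_add_left 1 k), altPair_succ_fst a b (k + 1)]
  noncomm_ring

theorem xword_eq_sum_mul {m : ℕ} (hm : 1 ≤ m) :
    xword a b m = (∑ i ∈ range m, (altPair a b i).2) * (a + 1) := by
  induction m, hm using Nat.le_induction with
  | base => simp [xword, altPair, add_comm]
  | succ k hk ih =>
    obtain ⟨j, rfl⟩ : ∃ j, k = j + 1 := ⟨k - 1, by omega⟩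
    rw [xword_succ_succ, ih, sum_range_succ _ (j + 1), add_mul]

end Words

section Hecke

variable {A : Type} [Ring A] {T1 T2 q : A} (hc1 : Commute q T1) (hc2 : Commute q T2)
  (h1 : T1 ^ 2 = (q - 1) * T1 + q) (h2 : T2 ^ 2 = (q - 1) * T2 + q)
include hc1 hc2 h1 h2

theorem hecke_initial_identity :
    (1 + T2 + T1 * T2 + T2 * T1 * T2) * (T1 + 1)
      = (1 + T2) * (T1 + 1) * ((T2 + 1) * (T1 + 1) - 2 * q) := by
  linear_combination (norm := noncomm_ring)
    -(1 + T2) * h1 - 2 * (1 + T2) * hc1.eq - h2 * (T1 + 1) - hc2.eq * (T1 + 1)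

theorem hecke_core_identity :
    T1 * T2 * (T1 * T2) * (T1 + 1)
      = T1 * T2 * (T1 + 1) * ((T2 + 1) * (T1 + 1) - 2 * q) - q ^ 2 * (T1 + 1) := by
  linear_combination (norm := noncomm_ring) -(T1 * T2 * h1 + 2 * (T1 * T2 * hc1.eq)
    + T1 * h2 * (T1 + 1) + T1 * hc2.eq * (T1 + 1) + q * h1 - hc1.eq * (T1 + 1))

theorem altPair_snd_add_four_mul (j : ℕ) :
    (altPair T1 T2 (4 + j)).2 * (T1 + 1)
      = (altPair T1 T2 (2 + j)).2 * (T1 + 1) * ((T2 + 1) * (T1 + 1) - 2 * q)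
        - q ^ 2 * ((altPair T1 T2 j).2 * (T1 + 1)) := by
  rw [add_comm 4, add_comm 2, show j + 4 = j + 2 + 2 from rfl, altPair_snd_add_two,
    altPair_snd_add_two]
  have hw := ((commute_altPair T1 T2 hc1 hc2 j).2.pow_left 2).eq
  linear_combination (norm := noncomm_ring)
    (altPair T1 T2 j).2 * hecke_core_identity hc1 hc2 h1 h2 + hw * (T1 + 1)

theorem xword_add_four {k : ℕ} (hk : 1 ≤ k) :
    xword T1 T2 (k + 4)
      = xword T1 T2 (k + 2) * ((T2 + 1) * (T1 + 1) - 2 * q) - q ^ 2 * xword T1 T2 k := by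
  set w := fun i => (altPair T1 T2 i).2
  have hinit : (∑ i ∈ range 4, w i) * (T1 + 1)
      = (∑ i ∈ range 2, w i) * (T1 + 1) * ((T2 + 1) * (T1 + 1) - 2 * q) := by
    simpa [w, sum_range_succ, altPair, add_assoc] using hecke_initial_identity hc1 hc2 h1 h2
  have hterms : (∑ j ∈ range k, w (4 + j)) * (T1 + 1)
      = (∑ j ∈ range k, w (2 + j)) * (T1 + 1) * ((T2 + 1) * (T1 + 1) - 2 * q)
        - q ^ 2 * ((∑ j ∈ range k, w j) * (T1 + 1)) := by
    simp only [sum_mul, mul_sum, ← sum_sub_distrib]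
    exact sum_congr rfl fun j _ => altPair_snd_add_four_mul hc1 hc2 h1 h2 j
  rw [xword_eq_sum_mul _ _ (by omega : 1 ≤ k + 4), xword_eq_sum_mul _ _ (by omega : 1 ≤ k + 2),
    xword_eq_sum_mul _ _ hk, add_comm k 4, add_comm k 2, sum_range_add, sum_range_add,
    add_mul, add_mul, add_mul, hinit, hterms]
  abel

end Hecke

/-- In the Hecke algebra of the infinite dihedral group (any `ℤ[q]`-algebra
generated by `T₁, T₂` satisfying only the quadratic relations `Tᵢ² = (q−1)Tᵢ + q`),
the elements `x^{(m)}_{(2,1)}` satisfy, for `m ≥ 5`, the recursion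
`x^{(m)}_{(2,1)} = x^{(m−2)}_{(2,1)}(x₂x₁ − 2q) − q² x^{(m−4)}_{(2,1)}`. -/
theorem stmt3 (A : Type) [Ring A] [Algebra (Polynomial ℤ) A]
    (T1 T2 : A) (q : A) (hq : q = algebraMap (Polynomial ℤ) A X)
    (h1 : T1 ^ 2 = (q - 1) * T1 + q) (h2 : T2 ^ 2 = (q - 1) * T2 + q)
    (m : ℕ) (hm : 5 ≤ m) :
    xword T1 T2 m
      = xword T1 T2 (m - 2) * ((T2 + 1) * (T1 + 1) - 2 * q)
        - q ^ 2 * xword T1 T2 (m - 4) := by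
  have hcentral (a : A) : Commute q a := hq ▸ Algebra.commutes X a
  obtain ⟨k, rfl⟩ : ∃ k, m = k + 4 := ⟨m - 4, by omega⟩
  exact xword_add_four (hcentral T1) (hcentral T2) h1 h2 (by omega)
end

section
/- In the Hecke algebra of the infinite dihedral group, x^{(m)}_{(2,1)} = Σ_{i=0}^{⌊(m−1)/2⌋} C(m−i−1, i)·(−q)^i · x_{[m−2i]1}, where x_{[j]1} = ⋯x_2 x_1 denotes the alternating product of j factors in x_1 = T_1+1 and x_2 = T_2+1 ending in x_1, and C(·,·) is the binomial coefficient. -/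
open Polynomial

/-!
Write `X_m` for `x^{(m)}_{(2,1)}` and `X'_m` for the same sum with `T₁, T₂` exchanged. Since
`T_{[i]2} T₁ = T_{[i+1]1}` and `T_{[i]1} T₁ = (q-1) T_{[i]1} + q T_{[i-1]2}`, right multiplication
by `x₁ = T₁ + 1` gives the three-term recurrence `X'_{m+1} x₁ = X_{m+2} + q X_m`. The right-hand
side of the theorem obeys the same recurrence, because `x_{[j]2} x₁ = x_{[j+1]1}` and the
binomial coefficients satisfy Pascal's rule. Both sides agree for `m = 1, 2`, and induction on `m`,
exchanging the roles of `T₁` and `T₂` at each step, finishes the proof.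
-/

section

variable {R : Type} [Ring R]

theorem altPair_swap (a b : R) (n : ℕ) : altPair b a n = (altPair a b n).swap := by
  induction n with
  | zero => rfl
  | succ n ih => simp [altPair, ih]

theorem altPair_fst_succ (a b : R) (n : ℕ) :
    (altPair a b (n + 1)).1 = (altPair b a n).1 * a := by
  rw [altPair_swap]; rfl

theorem altPair_fst_succ_mul_self {a b q : R} (hq : ∀ z, Commute q z)
    (ha : a ^ 2 = (q - 1) * a + q) (n : ℕ) :
    (altPair a b (n + 1)).1 * a = (q - 1) * (altPair a b (n + 1)).1 + q * (altPair a b n).2 := by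
  change (altPair a b n).2 * a * a = (q - 1) * ((altPair a b n).2 * a) + q * (altPair a b n).2
  rw [mul_assoc, ← sq, ha, mul_add, ← mul_assoc, ← ((hq _).sub_left (Commute.one_left _)).eq,
    mul_assoc, ← (hq _).eq]

theorem xword_succ (a b : R) {m : ℕ} (hm : 1 ≤ m) :
    xword a b (m + 1) = xword a b m + (altPair a b m).2 + (altPair a b (m + 1)).1 := by
  obtain ⟨n, rfl⟩ := Nat.exists_eq_add_of_le' hm
  rw [xword, xword, Nat.add_sub_cancel, Finset.sum_Icc_succ_top (Nat.le_add_left 1 n),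
    Nat.add_sub_cancel]
  abel

theorem xword_one (a b : R) : xword a b 1 = 1 + a := by
  simp [xword, altPair]

theorem xword_two (a b : R) : xword a b 2 = 1 + a + b + b * a := by
  rw [xword_succ a b le_rfl, xword_one]
  simp only [altPair, one_mul]

theorem xword_swap_mul {a b q : R} (hq : ∀ z, Commute q z) (ha : a ^ 2 = (q - 1) * a + q)
    {n : ℕ} (hn : 1 ≤ n) :
    xword b a (n + 1) * (a + 1) = xword a b (n + 2) + q * xword a b n := by
  induction n, hn using Nat.le_induction with
  | base =>
    change xword b a 2 * (a + 1) = xword a b 3 + q * xword a b 1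
    rw [xword_succ a b one_le_two, xword_two, xword_two, xword_one]
    simp only [altPair, one_mul]
    calc (1 + b + a + a * b) * (a + 1)
        = 1 + a + b + b * a + a * b + a * b * a + q * (1 + a) + (a ^ 2 - ((q - 1) * a + q)) := by
          noncomm_ring
      _ = _ := by rw [ha, sub_self, add_zero]
  | succ n hn ih =>
    have hB : (altPair a b (n + 2)).2 * a = (altPair a b (n + 3)).1 := rfl
    rw [xword_succ b a (by omega : 1 ≤ n + 1), add_mul, add_mul, ih, altPair_swap a b,
      altPair_swap a b, Prod.snd_swap, Prod.fst_swap, mul_add, mul_add, mul_one, mul_one,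
      altPair_fst_succ_mul_self hq ha n, hB,
      xword_succ a b (by omega : 1 ≤ n + 2), xword_succ a b hn]
    noncomm_ring

-- `q^{(m-1)/2} U_{m-1}(t / 2√q) = Σ_i C(m-i-1, i) (-q)^i t^{m-1-2i}` for the Chebyshev polynomial
-- `U` of the second kind.
def chebyshevSum (q : R) (y : ℕ → R) (m : ℕ) : R :=
  ∑ i ∈ Finset.range ((m - 1) / 2 + 1), (((m - i - 1).choose i : R) * (-q) ^ i) * y (m - 2 * i)

theorem chebyshevSum_eq_sum_range (q : R) (y : ℕ → R) {m N : ℕ} (hN : (m - 1) / 2 < N) :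
    chebyshevSum q y m
      = ∑ i ∈ Finset.range N, (((m - i - 1).choose i : R) * (-q) ^ i) * y (m - 2 * i) := by
  refine Finset.sum_subset (Finset.range_subset_range.mpr hN) fun i _ hi => ?_
  rw [Finset.mem_range, not_lt] at hi
  rw [Nat.choose_eq_zero_of_lt (by omega), Nat.cast_zero, zero_mul, zero_mul]

theorem chebyshevSum_mul (q : R) (y : ℕ → R) (m : ℕ) (r : R) :
    chebyshevSum q y m * r = chebyshevSum q (fun n => y n * r) m := by
  simp only [chebyshevSum, Finset.sum_mul, mul_assoc]

theorem chebyshevSum_succ (q : R) (y : ℕ → R) (n : ℕ) :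
    chebyshevSum q (fun k => y (k + 1)) (n + 2)
      = chebyshevSum q y (n + 3) + q * chebyshevSum q y (n + 1) := by
  rw [chebyshevSum_eq_sum_range q _ (N := n + 2) (by omega),
    chebyshevSum_eq_sum_range q y (m := n + 3) (N := n + 2) (by omega),
    chebyshevSum_eq_sum_range q y (m := n + 1) (N := n + 1) (by omega),
    Finset.sum_range_succ', Finset.sum_range_succ' (fun i => _ * y (n + 3 - 2 * i)),
    Finset.mul_sum, add_right_comm, ← Finset.sum_add_distrib]
  congr 1
  refine Finset.sum_congr rfl fun j _ => ?_
  rcases le_or_gt (2 * j) n with hj | hj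
  · obtain ⟨k, rfl⟩ := Nat.exists_eq_add_of_le hj
    rw [show 2 * j + k + 2 - (j + 1) - 1 = j + k by omega,
      show 2 * j + k + 2 - 2 * (j + 1) + 1 = k + 1 by omega,
      show 2 * j + k + 3 - (j + 1) - 1 = j + k + 1 by omega,
      show 2 * j + k + 3 - 2 * (j + 1) = k + 1 by omega,
      show 2 * j + k + 1 - j - 1 = j + k by omega, show 2 * j + k + 1 - 2 * j = k + 1 by omega,
      Nat.choose_succ_succ', Nat.cast_add, pow_succ' (-q) j,
      ← mul_assoc q, ← mul_assoc q, ← (Nat.cast_commute _ q).eq]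
    noncomm_ring
  · rw [Nat.choose_eq_zero_of_lt (by omega), Nat.choose_eq_zero_of_lt (by omega),
      Nat.choose_eq_zero_of_lt (by omega)]
    simp

theorem xword_eq_chebyshevSum {q : R} (hq : ∀ z, Commute q z) {m : ℕ}
    (hm : 1 ≤ m) {a b : R} (ha : a ^ 2 = (q - 1) * a + q) (hb : b ^ 2 = (q - 1) * b + q) :
    xword a b m = chebyshevSum q (fun n => (altPair (a + 1) (b + 1) n).1) m := by
  induction m using Nat.strong_induction_on generalizing a b with
  | _ m ih =>
  match m, hm with
  | 1, _ => simp [chebyshevSum, altPair, xword_one, add_comm]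
  | 2, _ =>
    simp only [xword_two, chebyshevSum, Nat.add_one_sub_one, Nat.reduceDiv, zero_add,
      Finset.range_one, Finset.sum_singleton, tsub_zero, Nat.choose_succ_self_right, Nat.cast_one,
      pow_zero, mul_one, mul_zero, altPair, one_mul]
    noncomm_ring
  | n + 3, _ =>
    have hrec : xword b a (n + 2) * (a + 1) = xword a b (n + 3) + q * xword a b (n + 1) :=
      xword_swap_mul hq ha (by omega)
    rw [ih (n + 2) (by omega) (by omega) hb ha, ih (n + 1) (by omega) (by omega) ha hb,
      chebyshevSum_mul] at hrec
    simp only [← altPair_fst_succ] at hrec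
    rw [chebyshevSum_succ q fun k => (altPair (a + 1) (b + 1) k).1] at hrec
    exact (add_right_cancel hrec).symm

end

/-- In the Hecke algebra of the infinite dihedral group,
`x^{(m)}_{(2,1)} = Σ_{i=0}^{⌊(m−1)/2⌋} C(m−i−1, i)·(−q)^i · x_{[m−2i]1}`, where
`x_{[j]1}` is the alternating product of `j` factors in `x₁ = T₁+1, x₂ = T₂+1` ending
in `x₁`. -/
theorem stmt5 (A : Type) [Ring A] [Algebra (Polynomial ℤ) A]
    (T1 T2 : A) (q : A) (hq : q = algebraMap (Polynomial ℤ) A X)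
    (h1 : T1 ^ 2 = (q - 1) * T1 + q) (h2 : T2 ^ 2 = (q - 1) * T2 + q)
    (m : ℕ) (hm : 1 ≤ m) :
    xword T1 T2 m
      = ∑ i ∈ Finset.range ((m - 1) / 2 + 1),
          (((m - i - 1).choose i : A) * (-q) ^ i) * (altPair (T1 + 1) (T2 + 1) (m - 2 * i)).1 := by
  have hq_central : ∀ z, Commute q z := fun z => hq ▸ Algebra.commutes X z
  exact xword_eq_chebyshevSum hq_central hm h1 h2
end

section
/- The set {c_w : w ∈ W} in the 0-Hecke algebra H_0 is a monoid under multiplication, isomorphic to the Hecke monoid (W, *), where s * w = w if ℓ(sw) < ℓ(w) and s * w = sw otherwise. Moreover {c_w} is a Z-basis of H_0 and c_x c_y = c_{x*y} for all x,y ∈ W. -/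
/-!
The elements `c_s = T_s + 1` are idempotent, since `T_s² = -T_s`. Hence `c_s c_w = c_{sw}` when
`s` is not a left descent of `w`, and `c_s c_w = c_s c_s c_{sw} = c_w` when it is: left
multiplication by `c_s` is `w ↦ s * w`, and induction along a reduced word of `x` gives
`c_x c_y = c_{x*y}`. Expanding the product along a reduced word,
`c_w = T_w + (a combination of T_v with ℓ(v) < ℓ(w))`, so `{c_w}` is unitriangular with
respect to the basis `{T_w}` graded by length, and is therefore a basis itself.
-/

/-- A realization of the 0-Hecke algebra of the Coxeter system `cs` over `ℤ`. -/
structure ZeroHeckeData {B W : Type} [Group W] {M : CoxeterMatrix B}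
    (cs : CoxeterSystem M W) (H : Type) [Ring H] [Algebra ℤ H] where
  T : Module.Basis W ℤ H
  T_one : T 1 = 1
  T_mul_of_lt : ∀ (i : B) (w : W), cs.length (cs.simple i * w) < cs.length w →
    T (cs.simple i) * T w = -T w
  T_mul_of_gt : ∀ (i : B) (w : W), cs.length w < cs.length (cs.simple i * w) →
    T (cs.simple i) * T w = T (cs.simple i * w)

namespace Module.Basis

variable {ι R M : Type*} [Ring R] [AddCommGroup M] [Module R M]

def spanDegLT (b : Basis ι R M) (f : ι → ℕ) (n : ℕ) : Submodule R M :=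
  Submodule.span R (b '' {j | f j < n})

variable {b : Basis ι R M} {f : ι → ℕ}

theorem repr_eq_zero_of_mem_spanDegLT {n : ℕ} {x : M} (hx : x ∈ b.spanDegLT f n) {j : ι}
    (hj : n ≤ f j) : b.repr x j = 0 := by
  induction hx using Submodule.span_induction with
  | mem _ hy =>
    obtain ⟨i, hi, rfl⟩ := hy
    have hij : i ≠ j := by rintro rfl; exact absurd hj (not_le.2 hi)
    simp [hij]
  | zero => simp
  | add _ _ _ _ hx hy => simp [hx, hy]
  | smul a _ _ hx => simp [hx]

theorem repr_of_sub_mem_spanDegLT {i j : ι} {x : M} (hx : x - b i ∈ b.spanDegLT f (f i))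
    (hij : f i ≤ f j) : b.repr x j = Finsupp.single i 1 j := by
  have := repr_eq_zero_of_mem_spanDegLT hx hij
  rwa [map_sub, Finsupp.sub_apply, repr_self, sub_eq_zero] at this

variable {v : ι → M}

theorem linearIndependent_of_sub_mem_spanDegLT (hv : ∀ i, v i - b i ∈ b.spanDegLT f (f i)) :
    LinearIndependent R v := by
  classical
  rw [linearIndependent_iff]
  intro l hl
  by_contra hl0
  obtain ⟨i₀, hi₀, hmax⟩ :=
    Finset.exists_max_image l.support f (Finsupp.support_nonempty_iff.2 hl0)
  have : b.repr (Finsupp.linearCombination R v l) i₀ = l i₀ := by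
    rw [Finsupp.linearCombination_apply, Finsupp.sum, map_sum, Finsupp.finsetSum_apply,
      Finset.sum_eq_single_of_mem i₀ hi₀]
    · simp [repr_of_sub_mem_spanDegLT (hv i₀) le_rfl]
    · intro i hi hne
      simp [repr_of_sub_mem_spanDegLT (hv i) (hmax i hi), hne]
  rw [hl, map_zero, Finsupp.zero_apply] at this
  exact Finsupp.mem_support_iff.1 hi₀ this.symm

theorem top_le_span_of_sub_mem_spanDegLT (hv : ∀ i, v i - b i ∈ b.spanDegLT f (f i)) :
    ⊤ ≤ Submodule.span R (Set.range v) := by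
  have mem_span : ∀ n i, f i < n → b i ∈ Submodule.span R (Set.range v) := by
    intro n
    induction n with
    | zero => intro i hi; omega
    | succ n ih =>
      intro i hi
      have hlow : b.spanDegLT f (f i) ≤ Submodule.span R (Set.range v) :=
        Submodule.span_le.2 fun _ ⟨j, hj, hbj⟩ => hbj ▸ ih j (by simp at hj; omega)
      rw [← sub_sub_cancel (v i) (b i)]
      exact Submodule.sub_mem _ (Submodule.subset_span ⟨i, rfl⟩) (hlow (hv i))
  rw [← b.span_eq]
  exact Submodule.span_le.2 (Set.range_subset_iff.2 fun i => mem_span _ i (Nat.lt_succ_self _))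

noncomputable def ofUnitriangular (b : Basis ι R M) (f : ι → ℕ)
    (hv : ∀ i, v i - b i ∈ b.spanDegLT f (f i)) : Basis ι R M :=
  .mk (linearIndependent_of_sub_mem_spanDegLT hv) (top_le_span_of_sub_mem_spanDegLT hv)

@[simp]
theorem coe_ofUnitriangular (hv : ∀ i, v i - b i ∈ b.spanDegLT f (f i)) :
    ⇑(b.ofUnitriangular f hv) = v :=
  coe_mk _ _

end Module.Basis

namespace CoxeterSystem

variable {B W : Type*} [Group W] {M : CoxeterMatrix B} (cs : CoxeterSystem M W)

theorem isReduced_cons_iff {i : B} {ω : List B} :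
    cs.IsReduced (i :: ω) ↔ cs.IsReduced ω ∧ ¬cs.IsLeftDescent (cs.wordProd ω) i := by
  rw [not_isLeftDescent_iff, ← wordProd_cons]
  refine ⟨fun h => ?_, fun ⟨hω, hlen⟩ => ?_⟩
  · have hω : cs.IsReduced ω := by simpa using h.drop 1
    exact ⟨hω, by rw [h.eq, hω.eq, List.length_cons]⟩
  · rw [IsReduced, hlen, hω.eq, List.length_cons]

theorem induction_on_not_isLeftDescent {p : W → Prop} (w : W) (one : p 1)
    (simple_mul : ∀ w i, ¬cs.IsLeftDescent w i → p w → p (cs.simple i * w)) : p w := by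
  obtain ⟨ω, hω, rfl⟩ := cs.exists_isReduced w
  induction ω with
  | nil => exact one
  | cons i ω ih =>
    obtain ⟨hω, hi⟩ := cs.isReduced_cons_iff.1 hω
    rw [wordProd_cons]
    exact simple_mul _ i hi (ih hω)

end CoxeterSystem

namespace ZeroHeckeData

variable {B W : Type} [Group W] {M : CoxeterMatrix B} {cs : CoxeterSystem M W}
  {H : Type} [Ring H] [Algebra ℤ H] (hd : ZeroHeckeData cs H)

theorem T_simple_mul_self (i : B) :
    hd.T (cs.simple i) * hd.T (cs.simple i) = -hd.T (cs.simple i) :=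
  hd.T_mul_of_lt i _ (by simp [cs.length_simple])

theorem isIdempotentElem_T_simple_add_one (i : B) :
    IsIdempotentElem (hd.T (cs.simple i) + 1) := by
  rw [IsIdempotentElem, add_mul, mul_add, T_simple_mul_self]
  noncomm_ring

theorem T_simple_add_one_mul_mem_spanDegLT (i : B) {n : ℕ} {x : H}
    (hx : x ∈ hd.T.spanDegLT cs.length n) :
    (hd.T (cs.simple i) + 1) * x ∈ hd.T.spanDegLT cs.length (n + 1) := by
  refine (Submodule.span_le (p := (hd.T.spanDegLT cs.length (n + 1)).comap
    (LinearMap.mulLeft ℤ (hd.T (cs.simple i) + 1)))).2 ?_ hx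
  rintro _ ⟨w, (hw : cs.length w < n), rfl⟩
  have hlow : ∀ v, cs.length v ≤ n → hd.T v ∈ hd.T.spanDegLT cs.length (n + 1) :=
    fun v hv => Submodule.subset_span ⟨v, Nat.lt_succ_of_le hv, rfl⟩
  rw [SetLike.mem_coe, Submodule.mem_comap, LinearMap.mulLeft_apply, add_mul, one_mul]
  by_cases hi : cs.IsLeftDescent w i
  · simp [hd.T_mul_of_lt i w hi]
  · have hlen := cs.not_isLeftDescent_iff.1 hi
    rw [hd.T_mul_of_gt i w (by omega)]
    exact Submodule.add_mem _ (hlow _ (by omega)) (hlow _ (by omega))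

def IsReducedWordProd (c : W → H) : Prop :=
  ∀ (w : W) (ω : List B), cs.wordProd ω = w → cs.IsReduced ω →
    c w = (ω.map (fun i => hd.T (cs.simple i) + 1)).prod

variable {hd} {c : W → H}

theorem IsReducedWordProd.c_one (hc : hd.IsReducedWordProd c) : c 1 = 1 := by
  simpa using hc 1 [] rfl (by simp [CoxeterSystem.IsReduced])

theorem IsReducedWordProd.c_simple_mul (hc : hd.IsReducedWordProd c) {w : W} {i : B}
    (hi : ¬cs.IsLeftDescent w i) : c (cs.simple i * w) = (hd.T (cs.simple i) + 1) * c w := by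
  obtain ⟨ω, hω, rfl⟩ := cs.exists_isReduced w
  rw [hc _ (i :: ω) (cs.wordProd_cons i ω) (cs.isReduced_cons_iff.2 ⟨hω, hi⟩),
    hc _ ω rfl hω, List.map_cons, List.prod_cons]

theorem IsReducedWordProd.T_simple_add_one_mul_c (hc : hd.IsReducedWordProd c) {w : W} {i : B}
    (hi : cs.IsLeftDescent w i) : (hd.T (cs.simple i) + 1) * c w = c w := by
  have hi' : ¬cs.IsLeftDescent (cs.simple i * w) i :=
    cs.isLeftDescent_iff_not_isLeftDescent_mul.1 hi
  have hw := hc.c_simple_mul hi'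
  rw [cs.simple_mul_simple_cancel_left] at hw
  rw [hw, ← mul_assoc, hd.isIdempotentElem_T_simple_add_one i]

theorem IsReducedWordProd.c_mul (hc : hd.IsReducedWordProd c) (star : W → W → W)
    (hassoc : ∀ x y z : W, star (star x y) z = star x (star y z))
    (hone : ∀ w : W, star 1 w = w)
    (hslt : ∀ (i : B) (w : W), cs.IsLeftDescent w i → star (cs.simple i) w = w)
    (hsgt : ∀ (i : B) (w : W), cs.length w < cs.length (cs.simple i * w) →
      star (cs.simple i) w = cs.simple i * w) (x y : W) :
    c x * c y = c (star x y) := by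
  have simple_mul_c : ∀ i w, (hd.T (cs.simple i) + 1) * c w = c (star (cs.simple i) w) := by
    intro i w
    by_cases hi : cs.IsLeftDescent w i
    · rw [hslt i w hi, hc.T_simple_add_one_mul_c hi]
    · rw [hsgt i w (by have := cs.not_isLeftDescent_iff.1 hi; omega), hc.c_simple_mul hi]
  induction x using cs.induction_on_not_isLeftDescent generalizing y with
  | one => rw [hc.c_one, one_mul, hone]
  | simple_mul x i hi ih =>
    have hx : star (cs.simple i) x = cs.simple i * x :=
      hsgt i x (by have := cs.not_isLeftDescent_iff.1 hi; omega)
    rw [hc.c_simple_mul hi, mul_assoc, ih, simple_mul_c, ← hassoc, hx]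

theorem IsReducedWordProd.c_sub_T_mem_spanDegLT (hc : hd.IsReducedWordProd c) (w : W) :
    c w - hd.T w ∈ hd.T.spanDegLT cs.length (cs.length w) := by
  induction w using cs.induction_on_not_isLeftDescent with
  | one => simp [hc.c_one, hd.T_one]
  | simple_mul w i hi ih =>
    have hlen := cs.not_isLeftDescent_iff.1 hi
    have hT : hd.T (cs.simple i * w) = hd.T (cs.simple i) * hd.T w :=
      (hd.T_mul_of_gt i w (by omega)).symm
    have hdecomp : c (cs.simple i * w) - hd.T (cs.simple i * w)
        = hd.T w + (hd.T (cs.simple i) + 1) * (c w - hd.T w) := by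
      rw [hc.c_simple_mul hi, hT]; noncomm_ring
    rw [hdecomp, hlen]
    exact Submodule.add_mem _ (Submodule.subset_span ⟨w, Nat.lt_succ_self _, rfl⟩)
      (hd.T_simple_add_one_mul_mem_spanDegLT i ih)

end ZeroHeckeData

/-- The set `{c_w : w ∈ W}` in the 0-Hecke algebra `H_0` is a monoid
under multiplication, isomorphic to the Hecke monoid `(W, *)` (with `s * w = w` if
`ℓ(sw) < ℓ(w)` and `s * w = sw` otherwise): i.e. `c_1 = 1`, `c_x c_y = c_{x*y}`, and
`w ↦ c_w` is injective.  Moreover `{c_w}` is a `ℤ`-basis of `H_0`.  Here `c_w` is the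
product of the `c_s = T_s + 1` along any reduced expression of `w`, and `star` is the
associative Hecke monoid product determined by the rule for `s * w`. -/
theorem stmt14 {B W : Type} [Group W] {M : CoxeterMatrix B} (cs : CoxeterSystem M W)
    (H : Type) [Ring H] [Algebra ℤ H] (hd : ZeroHeckeData cs H)
    (c : W → H)
    (hc : ∀ (w : W) (ω : List B), cs.wordProd ω = w → cs.IsReduced ω →
      c w = (ω.map (fun i => hd.T (cs.simple i) + 1)).prod)
    (star : W → W → W)
    (hassoc : ∀ x y z : W, star (star x y) z = star x (star y z))
    (hone : ∀ w : W, star 1 w = w)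
    (hslt : ∀ (i : B) (w : W), cs.length (cs.simple i * w) < cs.length w →
      star (cs.simple i) w = w)
    (hsgt : ∀ (i : B) (w : W), cs.length w < cs.length (cs.simple i * w) →
      star (cs.simple i) w = cs.simple i * w) :
    c 1 = 1 ∧
    (∀ x y : W, c x * c y = c (star x y)) ∧
    Function.Injective c ∧
    ∃ b : Module.Basis W ℤ H, ∀ w : W, b w = c w := by
  have hc' : hd.IsReducedWordProd c := hc
  have htri := hc'.c_sub_T_mem_spanDegLT
  refine ⟨hc'.c_one, hc'.c_mul star hassoc hone hslt hsgt,
    (Module.Basis.linearIndependent_of_sub_mem_spanDegLT htri).injective,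
    hd.T.ofUnitriangular cs.length htri, fun w => by simp⟩
end

section
/- In the 0-Hecke algebra H_0 of a Coxeter system, for every finitary subset I ⊆ S the element c_{w_I} = Σ_{w ∈ W_I} T_w is an idempotent, where w_I is the longest element of the finite parabolic subgroup W_I. -/
namespace ZeroHeckeData

variable {B W : Type} [Group W] {M : CoxeterMatrix B} {cs : CoxeterSystem M W}
  {H : Type} [Ring H] [Algebra ℤ H] (hd : ZeroHeckeData cs H)

theorem T_simple_mul_T_simple_mul_of_isLeftDescent {w : W} {i : B}
    (h : cs.IsLeftDescent w i) :
    hd.T (cs.simple i) * hd.T (cs.simple i * w) = hd.T w := by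
  rw [hd.T_mul_of_gt i _ (by rwa [cs.simple_mul_simple_cancel_left]),
    cs.simple_mul_simple_cancel_left]

theorem T_mul_T_simple_of_length_lt {v : W} {i : B}
    (h : cs.length v < cs.length (v * cs.simple i)) :
    hd.T v * hd.T (cs.simple i) = hd.T (v * cs.simple i) := by
  induction hn : cs.length v generalizing v with
  | zero => rw [cs.length_eq_zero_iff.mp hn, hd.T_one, one_mul, one_mul]
  | succ n ih =>
    obtain ⟨j, hj⟩ := cs.exists_leftDescent_of_ne_one (w := v) (by rintro rfl; simp at hn)
    have hjv : cs.length (cs.simple j * v) = n := by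
      have := cs.isLeftDescent_iff.mp hj; omega
    have hjvi := cs.length_mul_simple (cs.simple j * v) i
    have hjvi' := cs.length_simple_mul (v * cs.simple i) j
    rw [← mul_assoc] at hjvi'
    have hdesc : cs.IsLeftDescent (v * cs.simple i) j := by
      rw [CoxeterSystem.IsLeftDescent, ← mul_assoc]; omega
    rw [← hd.T_simple_mul_T_simple_mul_of_isLeftDescent hj, mul_assoc, ih (by omega) hjv,
      mul_assoc, hd.T_simple_mul_T_simple_mul_of_isLeftDescent hdesc]

theorem T_mul_T_simple_of_length_gt {v : W} {i : B}
    (h : cs.length (v * cs.simple i) < cs.length v) :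
    hd.T v * hd.T (cs.simple i) = -hd.T v := by
  have hu := hd.T_mul_T_simple_of_length_lt (v := v * cs.simple i) (i := i)
    (by rwa [cs.simple_mul_simple_cancel_right])
  rw [cs.simple_mul_simple_cancel_right] at hu
  rw [← hu, mul_assoc, T_simple_mul_self, mul_neg]

include hd in
theorem simple_mul_eq_mul_simple {x : W} {i j : B}
    (hi : cs.length x < cs.length (cs.simple i * x))
    (hj : cs.length x < cs.length (x * cs.simple j))
    (hij : cs.length (cs.simple i * x * cs.simple j) = cs.length x) :
    cs.simple i * x = x * cs.simple j := by
  have hleft : hd.T (cs.simple i) * hd.T x * hd.T (cs.simple j) = -hd.T (cs.simple i * x) := by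
    rw [hd.T_mul_of_gt i x hi, hd.T_mul_T_simple_of_length_gt (by omega)]
  have hright : hd.T (cs.simple i) * (hd.T x * hd.T (cs.simple j)) =
      -hd.T (x * cs.simple j) := by
    rw [hd.T_mul_T_simple_of_length_lt hj, hd.T_mul_of_lt i _ (by rw [← mul_assoc]; omega)]
  rw [← mul_assoc, hleft, neg_inj] at hright
  exact hd.T.injective hright

include hd in
theorem exists_eraseIdx_of_isLeftDescent {ω : List B} (hω : cs.IsReduced ω) {i : B}
    (hi : cs.IsLeftDescent (cs.wordProd ω) i) :
    ∃ k < ω.length, cs.simple i * cs.wordProd ω = cs.wordProd (ω.eraseIdx k) := by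
  induction ω using List.reverseRecOn with
  | nil => simp [CoxeterSystem.IsLeftDescent] at hi
  | append_singleton ω j ih =>
    have hω' : cs.IsReduced ω := by simpa using hω.take ω.length
    have hprod : cs.wordProd (ω ++ [j]) = cs.wordProd ω * cs.simple j := by
      rw [cs.wordProd_append, cs.wordProd_singleton]
    have hlen : cs.length (cs.wordProd ω * cs.simple j) = cs.length (cs.wordProd ω) + 1 := by
      rw [← hprod, hω, hω']; simp
    rw [hprod, CoxeterSystem.IsLeftDescent] at hi
    rcases cs.length_simple_mul (cs.wordProd ω) i with hup | hdown
    · have hflip := cs.length_simple_mul (cs.wordProd ω * cs.simple j) i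
      have hpivot := hd.simple_mul_eq_mul_simple (x := cs.wordProd ω) (i := i) (j := j)
        (by omega) (by omega) (by rw [mul_assoc]; omega)
      refine ⟨ω.length, by simp, ?_⟩
      rw [List.eraseIdx_append_of_length_le le_rfl, Nat.sub_self, List.eraseIdx_cons_zero,
        List.append_nil, hprod, ← mul_assoc, hpivot, mul_assoc, cs.simple_mul_simple_self,
        mul_one]
    · obtain ⟨k, hk, heq⟩ := ih hω' (by rw [CoxeterSystem.IsLeftDescent]; omega)
      refine ⟨k, by simp; omega, ?_⟩
      rw [List.eraseIdx_append_of_lt_length hk, hprod, ← mul_assoc, heq, cs.wordProd_append,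
        cs.wordProd_singleton]

include hd in
theorem exists_isReduced_simple_mul {I : Set B} {ω : List B} (hω : cs.IsReduced ω)
    (hωI : ∀ j ∈ ω, j ∈ I) {i : B} (hi : i ∈ I) :
    ∃ θ : List B, cs.IsReduced θ ∧ (∀ j ∈ θ, j ∈ I) ∧
      cs.wordProd θ = cs.simple i * cs.wordProd ω := by
  rcases cs.length_simple_mul (cs.wordProd ω) i with hup | hdown
  · refine ⟨i :: ω, ?_, by simpa [hi] using hωI, cs.wordProd_cons i ω⟩
    rw [CoxeterSystem.IsReduced, cs.wordProd_cons, hup, hω, List.length_cons]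
  · obtain ⟨k, hk, heq⟩ := hd.exists_eraseIdx_of_isLeftDescent hω
      (i := i) (by rw [CoxeterSystem.IsLeftDescent]; omega)
    refine ⟨ω.eraseIdx k, ?_, fun j hj => hωI j ((List.eraseIdx_sublist ω k).subset hj),
      heq.symm⟩
    rw [CoxeterSystem.IsReduced, ← heq, List.length_eraseIdx_of_lt hk, ← hω]
    omega

include hd in
theorem exists_isReduced_of_mem_closure {I : Set B} {w : W}
    (hw : w ∈ Subgroup.closure (cs.simple '' I)) :
    ∃ ω : List B, cs.IsReduced ω ∧ (∀ j ∈ ω, j ∈ I) ∧ cs.wordProd ω = w := by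
  induction hw using Subgroup.closure_induction_left with
  | one => exact ⟨[], by simp [CoxeterSystem.IsReduced], by simp, rfl⟩
  | mul_left _ hs _ _ ih =>
    obtain ⟨i, hi, rfl⟩ := hs
    obtain ⟨ω, hω, hωI, rfl⟩ := ih
    exact hd.exists_isReduced_simple_mul hω hωI hi
  | inv_mul_cancel _ hs _ _ ih =>
    obtain ⟨i, hi, rfl⟩ := hs
    obtain ⟨ω, hω, hωI, rfl⟩ := ih
    rw [cs.inv_simple]
    exact hd.exists_isReduced_simple_mul hω hωI hi

include hd in
theorem exists_isLeftDescent_of_mem_closure {I : Set B} {w : W}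
    (hw : w ∈ Subgroup.closure (cs.simple '' I)) (hne : w ≠ 1) :
    ∃ i ∈ I, cs.IsLeftDescent w i := by
  obtain ⟨_ | ⟨i, ω⟩, hω, hωI, rfl⟩ := hd.exists_isReduced_of_mem_closure hw
  · exact absurd cs.wordProd_nil hne
  · refine ⟨i, hωI i List.mem_cons_self, ?_⟩
    rw [CoxeterSystem.IsLeftDescent, hω, cs.wordProd_cons, cs.simple_mul_simple_cancel_left,
      List.length_cons]
    exact Nat.lt_succ_of_le (cs.length_wordProd_le ω)

theorem T_simple_mul_add_T_simple_mul (i : B) (w : W) :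
    hd.T (cs.simple i) * hd.T w + hd.T (cs.simple i) * hd.T (cs.simple i * w) = 0 := by
  by_cases h : cs.IsLeftDescent w i
  · rw [hd.T_mul_of_lt i w h, hd.T_simple_mul_T_simple_mul_of_isLeftDescent h, neg_add_cancel]
  · rw [cs.not_isLeftDescent_iff] at h
    rw [hd.T_mul_of_gt i w (by omega), hd.T_mul_of_lt i _ (by
      rw [cs.simple_mul_simple_cancel_left]; omega), add_neg_cancel]

theorem T_simple_mul_sum_eq_zero {F : Finset W} (i : B)
    (hF : ∀ w ∈ F, cs.simple i * w ∈ F) :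
    hd.T (cs.simple i) * ∑ w ∈ F, hd.T w = 0 := by
  rw [Finset.mul_sum]
  exact Finset.sum_involution (fun w _ => cs.simple i * w)
    (fun w _ => hd.T_simple_mul_add_T_simple_mul i w)
    (fun w _ _ h => cs.length_simple_mul_ne w i (congrArg cs.length h)) hF
    (fun w _ => cs.simple_mul_simple_cancel_left i)

theorem T_mul_sum_eq_zero_of_mem_closure {I : Set B} {F : Finset W}
    (hF : ∀ i ∈ I, ∀ w ∈ F, cs.simple i * w ∈ F) {w : W}
    (hw : w ∈ Subgroup.closure (cs.simple '' I)) (hne : w ≠ 1) :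
    hd.T w * ∑ v ∈ F, hd.T v = 0 := by
  induction hn : cs.length w using Nat.strong_induction_on generalizing w with
  | _ n ih =>
    obtain ⟨i, hi, hdesc⟩ := hd.exists_isLeftDescent_of_mem_closure hw hne
    have hu : cs.simple i * w ∈ Subgroup.closure (cs.simple '' I) :=
      mul_mem (Subgroup.subset_closure ⟨i, hi, rfl⟩) hw
    rw [← hd.T_simple_mul_T_simple_mul_of_isLeftDescent hdesc, mul_assoc]
    by_cases h1 : cs.simple i * w = 1
    · rw [h1, hd.T_one, one_mul, hd.T_simple_mul_sum_eq_zero i (hF i hi)]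
    · rw [ih _ (hn ▸ hdesc) hu h1 rfl, mul_zero]

end ZeroHeckeData

/-- In the 0-Hecke algebra `H_0` of a Coxeter system, for every
finitary subset `I ⊆ S` the element `c_{w_I} = Σ_{w ∈ W_I} T_w` is an idempotent. -/
theorem stmt15 {B W : Type} [Group W] {M : CoxeterMatrix B} (cs : CoxeterSystem M W)
    (H : Type) [Ring H] [Algebra ℤ H] (hd : ZeroHeckeData cs H)
    (I : Set B)
    (hfin : Set.Finite ((Subgroup.closure (cs.simple '' I) : Subgroup W) : Set W)) :
    (∑ w ∈ hfin.toFinset, hd.T w) * (∑ w ∈ hfin.toFinset, hd.T w)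
      = ∑ w ∈ hfin.toFinset, hd.T w := by
  have hmem : ∀ w, w ∈ hfin.toFinset ↔ w ∈ Subgroup.closure (cs.simple '' I) :=
    fun _ => hfin.mem_toFinset
  have hstable : ∀ i ∈ I, ∀ w ∈ hfin.toFinset, cs.simple i * w ∈ hfin.toFinset :=
    fun i hi w hw => (hmem _).2 (mul_mem (Subgroup.subset_closure ⟨i, hi, rfl⟩) ((hmem w).1 hw))
  rw [Finset.sum_mul, Finset.sum_eq_single_of_mem 1 ((hmem 1).2 (one_mem _)), hd.T_one, one_mul]
  exact fun w hw hne => hd.T_mul_sum_eq_zero_of_mem_closure hstable ((hmem w).1 hw) hne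
end

section
/- In the Hecke monoid (W,*) of a Coxeter system, if I, J, K are finitary subsets of S, x is the longest element of its double coset W_I x W_J and y is the longest element of its double coset W_J y W_K, then x * y is the longest element of the double coset W_I (x*y) W_K. -/
/-!
Right inversions are counted by the reflection representation (Björner–Brenti): `t` is a right
inversion of `w` iff it occurs an odd number of times in the right inversion sequence of a word
for `w`. This gives `ℓ w = |N(w)|` and the cocycle rule `N(uv) = v⁻¹ N(u) v ∆ N(v)`.

Since `s_i * x = x` for `i ∈ I` and `y * s_k = y` for `k ∈ K`, `z = x * y` has every `i ∈ I`
as a left descent and every `k ∈ K` as a right descent. In the Hecke monoid an element of `W_K`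
with all of `K` as right descents absorbs `W_K` on the right, so it is the longest element of
`W_K`; writing `z` over a minimal representative of `z W_K` then shows that every reflection of
`W_K` is a right inversion of `z`, and likewise every reflection of `W_I` is a left inversion of
`z`. For `a ∈ W_I` and `c ∈ W_K` the cocycle rule now makes `t ↦ c t c⁻¹` an injection of
`N(a z c)` into `N(z)`.
-/

open Pointwise

namespace CoxeterSystem

variable {B W : Type*} [Group W] {M : CoxeterMatrix B} (cs : CoxeterSystem M W)

local prefix:100 "s " => cs.simple
local prefix:100 "π " => cs.wordProd
local prefix:100 "ℓ " => cs.length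
local prefix:100 "ris " => cs.rightInvSeq

theorem simple_mul_pow_simple_mul_simple (i j : B) (m : ℕ) :
    s j * (s i * s j) ^ m = ((s i * s j) ^ m)⁻¹ * s j := by
  have h : MulAut.conj (s j) (s i * s j) = (s i * s j)⁻¹ := by
    simp [mul_assoc]
  rw [← mul_inv_eq_iff_eq_mul, ← inv_pow, ← h, ← map_pow, MulAut.conj_apply, inv_simple]

theorem alternatingWord_two_mul_succ (i j : B) (m : ℕ) :
    alternatingWord i j (2 * (m + 1)) = i :: j :: alternatingWord i j (2 * m) := by
  rw [show 2 * (m + 1) = 2 * m + 1 + 1 by ring, alternatingWord_succ', alternatingWord_succ']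
  simp

theorem wordProd_alternatingWord_two_mul (i j : B) (m : ℕ) :
    π (alternatingWord i j (2 * m)) = (s i * s j) ^ m := by
  simp [prod_alternatingWord_eq_mul_pow]

theorem rightInvSeq_alternatingWord_two_mul (i j : B) (m : ℕ) :
    ris (alternatingWord i j (2 * m)) =
      ((List.range (2 * m)).map fun d => ((s i * s j) ^ d)⁻¹ * s j).reverse := by
  induction m with
  | zero => simp [alternatingWord]
  | succ m ih =>
    rw [alternatingWord_two_mul_succ, rightInvSeq, rightInvSeq, ih, wordProd_cons,
      wordProd_alternatingWord_two_mul, show 2 * (m + 1) = 2 * m + 1 + 1 by ring,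
      List.range_succ, List.range_succ]
    have h := cs.simple_mul_pow_simple_mul_simple i j m
    simp only [List.map_append, List.map_cons, List.map_nil, List.reverse_append,
      List.reverse_cons, List.reverse_nil, List.nil_append, List.cons_append, List.cons.injEq,
      and_true]
    constructor
    · rw [show 2 * m + 1 = m + 1 + m by ring, pow_add, pow_succ]
      simp only [mul_inv_rev, mul_assoc, inv_simple]
      rw [← h]
    · rw [mul_assoc, h, two_mul, pow_add, mul_inv_rev, mul_assoc]

theorem natCast_count_rightInvSeq_alternatingWord [DecidableEq W] (i j : B) (t : W) :
    ((ris (alternatingWord i j (2 * M i j))).count t : ZMod 2) = 0 := by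
  have hperiod : ∀ d, ((s i * s j) ^ (M i j + d))⁻¹ * s j = ((s i * s j) ^ d)⁻¹ * s j :=
    fun d => by rw [pow_add, simple_mul_simple_pow, one_mul]
  rw [rightInvSeq_alternatingWord_two_mul, List.count_reverse, two_mul, List.range_add,
    List.map_append, List.map_map, Function.comp_def]
  simp only [hperiod, List.count_append, Nat.cast_add]
  exact CharTwo.add_self_eq_zero _

section ReflectionRepresentation

variable [DecidableEq W]

/-- Along a word, the second coordinate counts, mod 2, the occurrences of the first one in the
right inversion sequence (`prod_map_reflPerm_apply`). -/
def reflPerm (i : B) : Equiv.Perm (W × ZMod 2) :=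
  Function.Involutive.toPerm (fun p => (s i * p.1 * s i, p.2 + if p.1 = s i then 1 else 0))
    (by
      rintro ⟨t, e⟩
      have hconj : s i * t * s i = s i ↔ t = s i := by
        constructor <;> intro h
        · simpa [mul_assoc] using congrArg (fun w => s i * w * s i) h
        · simp [h]
      simp only [hconj, add_assoc, ← two_mul, CharTwo.two_eq_zero, zero_mul, add_zero]
      simp [mul_assoc])

theorem reflPerm_apply (i : B) (t : W) (e : ZMod 2) :
    cs.reflPerm i (t, e) = (s i * t * s i, e + if t = s i then 1 else 0) := rfl

theorem prod_map_reflPerm_apply (ω : List B) (t : W) (e : ZMod 2) :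
    (ω.map cs.reflPerm).prod (t, e) = (π ω * t * (π ω)⁻¹, e + (ris ω).count t) := by
  induction ω generalizing t e with
  | nil => simp
  | cons i ω ih =>
    have hconj : π ω * t * (π ω)⁻¹ = s i ↔ (π ω)⁻¹ * s i * π ω = t := by
      constructor <;> intro h <;> rw [← h] <;> group
    simp only [List.map_cons, List.prod_cons, Equiv.Perm.mul_apply, ih, reflPerm_apply,
      wordProd_cons, rightInvSeq, List.count_cons, beq_iff_eq, hconj, mul_inv_rev, inv_simple]
    refine Prod.ext (by simp [mul_assoc]) ?_
    push_cast
    ring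

theorem reflPerm_mul_pow (i j : B) (m : ℕ) :
    (cs.reflPerm i * cs.reflPerm j) ^ m =
      ((alternatingWord i j (2 * m)).map cs.reflPerm).prod := by
  induction m with
  | zero => simp [alternatingWord]
  | succ m ih => simp [pow_succ', ih, alternatingWord_two_mul_succ, mul_assoc]

theorem isLiftable_reflPerm : M.IsLiftable cs.reflPerm := fun i j => by
  ext1 ⟨t, e⟩
  rw [reflPerm_mul_pow, prod_map_reflPerm_apply, natCast_count_rightInvSeq_alternatingWord,
    wordProd_alternatingWord_two_mul, simple_mul_simple_pow]
  simp

def reflRep : W →* Equiv.Perm (W × ZMod 2) := cs.lift ⟨cs.reflPerm, cs.isLiftable_reflPerm⟩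

theorem reflRep_wordProd_apply (ω : List B) (t : W) (e : ZMod 2) :
    cs.reflRep (π ω) (t, e) = (π ω * t * (π ω)⁻¹, e + (ris ω).count t) := by
  rw [← prod_map_reflPerm_apply, wordProd, map_list_prod, List.map_map]
  congr 3
  funext i
  exact cs.lift_apply_simple cs.isLiftable_reflPerm i

def inversionParity (w t : W) : ZMod 2 := (cs.reflRep w (t, 0)).2

theorem inversionParity_wordProd (ω : List B) (t : W) :
    cs.inversionParity (π ω) t = (ris ω).count t := by
  simp [inversionParity, reflRep_wordProd_apply]

theorem reflRep_apply (w t : W) (e : ZMod 2) :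
    cs.reflRep w (t, e) = (w * t * w⁻¹, e + cs.inversionParity w t) := by
  obtain ⟨ω, rfl⟩ := cs.wordProd_surjective w
  rw [reflRep_wordProd_apply, inversionParity_wordProd]

theorem inversionParity_mul (u v t : W) :
    cs.inversionParity (u * v) t =
      cs.inversionParity v t + cs.inversionParity u (v * t * v⁻¹) := by
  show (cs.reflRep (u * v) (t, 0)).2 = _
  rw [map_mul, Equiv.Perm.mul_apply, reflRep_apply, reflRep_apply, zero_add]

theorem inversionParity_self {t : W} (ht : cs.IsReflection t) : cs.inversionParity t t = 1 := by
  obtain ⟨u, i, rfl⟩ := ht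
  have hone : cs.inversionParity (u⁻¹ * u) (s i) = 0 := by
    simpa using cs.inversionParity_wordProd [] (s i)
  have hsimple : cs.inversionParity (s i) (s i) = 1 := by
    simpa [rightInvSeq] using cs.inversionParity_wordProd [i] (s i)
  rw [inversionParity_mul] at hone
  rw [inversionParity_mul, inversionParity_mul]
  simp only [inv_inv, show u⁻¹ * (u * s i * u⁻¹) * u = s i by group,
    show s i * s i * (s i)⁻¹ = s i by group, hsimple]
  linear_combination hone

theorem mem_rightInvSeq_of_inversionParity_eq_one {ω : List B} {t : W}
    (h : cs.inversionParity (π ω) t = 1) : t ∈ ris ω := by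
  rw [inversionParity_wordProd] at h
  by_contra hmem
  simp [List.count_eq_zero_of_not_mem hmem] at h

theorem isRightInversion_iff_inversionParity_eq_one {w t : W} :
    cs.IsRightInversion w t ↔ cs.inversionParity w t = 1 := by
  have of_parity : ∀ {w t : W}, cs.inversionParity w t = 1 → cs.IsRightInversion w t := by
    intro w t h
    obtain ⟨ω, hω, rfl⟩ := cs.exists_isReduced w
    exact cs.isRightInversion_of_mem_rightInvSeq hω
      (cs.mem_rightInvSeq_of_inversionParity_eq_one h)
  refine ⟨fun h => ?_, of_parity⟩
  by_contra hne
  have hzero : cs.inversionParity w t = 0 := by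
    generalize cs.inversionParity w t = a at hne
    revert a
    decide
  -- otherwise `t` would also be a right inversion of `w * t`
  have hwt : cs.inversionParity (w * t) t = 1 := by
    rw [inversionParity_mul, inversionParity_self cs h.1, mul_inv_cancel_right, hzero, add_zero]
  exact h.1.isRightInversion_mul_left_iff.mp (of_parity hwt) h

end ReflectionRepresentation

theorem isRightInversion_mul_iff {u v t : W} :
    cs.IsRightInversion (u * v) t ↔
      Xor (cs.IsRightInversion v t) (cs.IsRightInversion u (v * t * v⁻¹)) := by
  classical
  simp only [isRightInversion_iff_inversionParity_eq_one, inversionParity_mul]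
  generalize cs.inversionParity v t = a
  generalize cs.inversionParity u (v * t * v⁻¹) = b
  revert a b
  decide

theorem mem_rightInvSeq_of_isRightInversion {ω : List B} {t : W}
    (h : cs.IsRightInversion (π ω) t) : t ∈ ris ω := by
  classical
  exact cs.mem_rightInvSeq_of_inversionParity_eq_one
    (cs.isRightInversion_iff_inversionParity_eq_one.mp h)

theorem eq_simple_of_isRightInversion_simple {i : B} {t : W}
    (h : cs.IsRightInversion (s i) t) : t = s i := by
  simpa [rightInvSeq] using
    cs.mem_rightInvSeq_of_isRightInversion (ω := [i]) (by simpa using h)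

theorem isRightInversion_inv_conj_iff {w t : W} :
    cs.IsRightInversion w⁻¹ (w * t * w⁻¹) ↔ cs.IsRightInversion w t := by
  rw [isRightInversion_inv_iff, IsLeftInversion, IsRightInversion, isReflection_conj_iff,
    inv_mul_cancel_right]

theorem length_le_length_of_isRightInversion_injective {u z : W} {f : W → W}
    (hf : Function.Injective f)
    (h : ∀ t, cs.IsRightInversion u t → cs.IsRightInversion z (f t)) : ℓ u ≤ ℓ z := by
  classical
  obtain ⟨ωu, hωu, rfl⟩ := cs.exists_isReduced u
  obtain ⟨ωz, hωz, rfl⟩ := cs.exists_isReduced z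
  rw [hωu, hωz, ← cs.length_rightInvSeq, ← cs.length_rightInvSeq,
    ← List.toFinset_card_of_nodup hωu.nodup_rightInvSeq,
    ← List.toFinset_card_of_nodup hωz.nodup_rightInvSeq]
  refine Finset.card_le_card_of_injOn f (fun t ht => ?_) hf.injOn
  simp only [Finset.mem_coe, List.mem_toFinset] at ht ⊢
  exact cs.mem_rightInvSeq_of_isRightInversion
    (h t (cs.isRightInversion_of_mem_rightInvSeq hωu ht))

def IsParabolicReflection (K : Set B) (t : W) : Prop :=
  ∃ d ∈ Subgroup.closure (cs.simple '' K), ∃ k ∈ K, t = d * s k * d⁻¹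

namespace IsParabolicReflection

variable {cs} {K : Set B} {t : W}

theorem isReflection (ht : cs.IsParabolicReflection K t) : cs.IsReflection t := by
  obtain ⟨d, -, k, -, rfl⟩ := ht
  exact ⟨d, k, rfl⟩

theorem mem_closure (ht : cs.IsParabolicReflection K t) :
    t ∈ Subgroup.closure (cs.simple '' K) := by
  obtain ⟨d, hd, k, hk, rfl⟩ := ht
  exact mul_mem (mul_mem hd (Subgroup.subset_closure ⟨k, hk, rfl⟩)) (inv_mem hd)

theorem conj (ht : cs.IsParabolicReflection K t) {c : W}
    (hc : c ∈ Subgroup.closure (cs.simple '' K)) :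
    cs.IsParabolicReflection K (c * t * c⁻¹) := by
  obtain ⟨d, hd, k, hk, rfl⟩ := ht
  exact ⟨c * d, mul_mem hc hd, k, hk, by group⟩

end IsParabolicReflection

theorem isParabolicReflection_simple {K : Set B} {k : B} (hk : k ∈ K) :
    cs.IsParabolicReflection K (s k) :=
  ⟨1, one_mem _, k, hk, by simp⟩

theorem isParabolicReflection_of_isRightInversion {K : Set B} {c t : W}
    (hc : c ∈ Subgroup.closure (cs.simple '' K)) (ht : cs.IsRightInversion c t) :
    cs.IsParabolicReflection K t := by
  have step : ∀ k ∈ K, ∀ y ∈ Subgroup.closure (cs.simple '' K),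
      (∀ {t}, cs.IsRightInversion y t → cs.IsParabolicReflection K t) →
      ∀ {t}, cs.IsRightInversion (s k * y) t → cs.IsParabolicReflection K t := by
    intro k hk y hy ih t ht
    rcases (cs.isRightInversion_mul_iff.mp ht).or with ht | ht
    · exact ih ht
    · have hyt := cs.eq_simple_of_isRightInversion_simple ht
      exact ⟨y⁻¹, inv_mem hy, k, hk, by rw [← hyt]; group⟩
  revert t
  induction hc using Subgroup.closure_induction_left with
  | one => exact fun ht => absurd ht.2 (by simp)
  | mul_left _ hx y hy ih =>
    obtain ⟨k, hk, rfl⟩ := hx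
    exact step k hk y hy ih
  | inv_mul_cancel _ hx y hy ih =>
    obtain ⟨k, hk, rfl⟩ := hx
    rw [inv_simple]
    exact step k hk y hy ih

theorem isRightInversion_mul_iff_of_minimal {K : Set B} {z c t : W}
    (hmin : ∀ d ∈ Subgroup.closure (cs.simple '' K), ℓ z ≤ ℓ (z * d))
    (hc : c ∈ Subgroup.closure (cs.simple '' K)) (ht : cs.IsParabolicReflection K t) :
    cs.IsRightInversion (z * c) t ↔ cs.IsRightInversion c t := by
  have hz : ¬ cs.IsRightInversion z (c * t * c⁻¹) :=
    fun h => (hmin _ (ht.conj hc).mem_closure).not_gt h.2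
  rw [isRightInversion_mul_iff, xor_comm, iff_false_intro hz, xor_false, id]

theorem length_mul_mul_le_of_isParabolicReflection {I K : Set B} {z a c : W}
    (hI : ∀ t, cs.IsParabolicReflection I t → cs.IsRightInversion z⁻¹ t)
    (hK : ∀ t, cs.IsParabolicReflection K t → cs.IsRightInversion z t)
    (ha : a ∈ Subgroup.closure (cs.simple '' I))
    (hc : c ∈ Subgroup.closure (cs.simple '' K)) : ℓ (a * z * c) ≤ ℓ z := by
  refine cs.length_le_length_of_isRightInversion_injective (MulAut.conj c).injective
    fun t ht => ?_
  rw [MulAut.conj_apply]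
  rcases (cs.isRightInversion_mul_iff.mp ht).or with htc | htaz
  · exact hK _ ((cs.isParabolicReflection_of_isRightInversion hc htc).conj hc)
  rcases (cs.isRightInversion_mul_iff.mp htaz).or with htz | hta
  · exact htz
  · exact cs.isRightInversion_inv_conj_iff.mp
      (hI _ (cs.isParabolicReflection_of_isRightInversion ha hta))

section HeckeMonoid

variable (star : W → W → W)

theorem length_le_length_star_simple
    (hslt : ∀ (i : B) (w : W), ℓ (s i * w) < ℓ w → star (s i) w = w)
    (hsgt : ∀ (i : B) (w : W), ℓ w < ℓ (s i * w) → star (s i) w = s i * w)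
    (i : B) (w : W) : ℓ w ≤ ℓ (star (s i) w) := by
  rcases (cs.length_simple_mul_ne w i).lt_or_gt with h | h
  · rw [hslt i w h]
  · rw [hsgt i w h]
    exact h.le

theorem star_induction
    (hsgt : ∀ (i : B) (w : W), ℓ w < ℓ (s i * w) → star (s i) w = s i * w)
    {P : W → Prop} (one : P 1) (simple_star : ∀ i w, P w → P (star (s i) w)) (w : W) :
    P w := by
  induction hn : ℓ w using Nat.strong_induction_on generalizing w with
  | _ n ih =>
    by_cases hw : w = 1
    · rwa [hw]
    obtain ⟨i, hi⟩ := cs.exists_leftDescent_of_ne_one hw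
    have hstar : star (s i) (s i * w) = w := by
      rw [hsgt i _ (by rwa [simple_mul_simple_cancel_left]), simple_mul_simple_cancel_left]
    rw [← hstar]
    exact simple_star i _ (ih _ (hn ▸ hi) _ rfl)

theorem length_le_length_star
    (hassoc : ∀ x y z : W, star (star x y) z = star x (star y z))
    (honeL : ∀ w : W, star 1 w = w)
    (hslt : ∀ (i : B) (w : W), ℓ (s i * w) < ℓ w → star (s i) w = w)
    (hsgt : ∀ (i : B) (w : W), ℓ w < ℓ (s i * w) → star (s i) w = s i * w)
    (u v : W) : ℓ v ≤ ℓ (star u v) := by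
  refine cs.star_induction star hsgt (P := fun u => ∀ v, ℓ v ≤ ℓ (star u v))
    (fun v => by rw [honeL]) (fun i u ih v => ?_) u v
  rw [hassoc]
  exact (ih v).trans (cs.length_le_length_star_simple star hslt hsgt i _)

theorem star_simple_mul_eq_star
    (hassoc : ∀ x y z : W, star (star x y) z = star x (star y z))
    (hsgt : ∀ (i : B) (w : W), ℓ w < ℓ (s i * w) → star (s i) w = s i * w)
    {z : W} {i : B} (hz : star z (s i) = z) (c : W) : star z (s i * c) = star z c := by
  have of_lt : ∀ c, ℓ c < ℓ (s i * c) → star z (s i * c) = star z c := fun c h => by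
    rw [← hsgt i c h, ← hassoc, hz]
  rcases (cs.length_simple_mul_ne c i).lt_or_gt with h | h
  · have := of_lt (s i * c) (by rwa [simple_mul_simple_cancel_left])
    rw [simple_mul_simple_cancel_left] at this
    exact this.symm
  · exact of_lt c h

theorem star_eq_self_of_mem_closure
    (hassoc : ∀ x y z : W, star (star x y) z = star x (star y z))
    (honeR : ∀ w : W, star w 1 = w)
    (hsgt : ∀ (i : B) (w : W), ℓ w < ℓ (s i * w) → star (s i) w = s i * w)
    {K : Set B} {z : W} (hz : ∀ k ∈ K, star z (s k) = z) {c : W}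
    (hc : c ∈ Subgroup.closure (cs.simple '' K)) : star z c = z := by
  induction hc using Subgroup.closure_induction_left with
  | one => exact honeR z
  | mul_left _ hx y _ ih =>
    obtain ⟨k, hk, rfl⟩ := hx
    rw [cs.star_simple_mul_eq_star star hassoc hsgt (hz k hk), ih]
  | inv_mul_cancel _ hx y _ ih =>
    obtain ⟨k, hk, rfl⟩ := hx
    rw [inv_simple, cs.star_simple_mul_eq_star star hassoc hsgt (hz k hk), ih]

theorem isLeftDescent_of_simple_star_eq
    (hsgt : ∀ (i : B) (w : W), ℓ w < ℓ (s i * w) → star (s i) w = s i * w)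
    {i : B} {w : W} (h : star (s i) w = w) : cs.IsLeftDescent w i :=
  (cs.length_simple_mul_ne w i).lt_or_gt.resolve_right fun hgt =>
    hgt.ne' (congrArg cs.length ((hsgt i w hgt).symm.trans h))

theorem isRightDescent_of_star_simple_eq
    (hsgt' : ∀ (i : B) (w : W), ℓ w < ℓ (w * s i) → star w (s i) = w * s i)
    {i : B} {w : W} (h : star w (s i) = w) : cs.IsRightDescent w i :=
  (cs.length_mul_simple_ne w i).lt_or_gt.resolve_right fun hgt =>
    hgt.ne' (congrArg cs.length ((hsgt' i w hgt).symm.trans h))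

theorem length_le_of_forall_isRightDescent
    (hassoc : ∀ x y z : W, star (star x y) z = star x (star y z))
    (honeL : ∀ w : W, star 1 w = w) (honeR : ∀ w : W, star w 1 = w)
    (hslt : ∀ (i : B) (w : W), ℓ (s i * w) < ℓ w → star (s i) w = w)
    (hsgt : ∀ (i : B) (w : W), ℓ w < ℓ (s i * w) → star (s i) w = s i * w)
    (hslt' : ∀ (i : B) (w : W), ℓ (w * s i) < ℓ w → star w (s i) = w)
    {K : Set B} {c : W} (hc : ∀ k ∈ K, cs.IsRightDescent c k) {d : W}
    (hd : d ∈ Subgroup.closure (cs.simple '' K)) : ℓ d ≤ ℓ c := by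
  calc ℓ d ≤ ℓ (star c d) := cs.length_le_length_star star hassoc honeL hslt hsgt c d
    _ = ℓ c := by
      rw [cs.star_eq_self_of_mem_closure star hassoc honeR hsgt
        (fun k hk => hslt' k c (hc k hk)) hd]

theorem isRightInversion_of_isParabolicReflection
    (hassoc : ∀ x y z : W, star (star x y) z = star x (star y z))
    (honeL : ∀ w : W, star 1 w = w) (honeR : ∀ w : W, star w 1 = w)
    (hslt : ∀ (i : B) (w : W), ℓ (s i * w) < ℓ w → star (s i) w = w)
    (hsgt : ∀ (i : B) (w : W), ℓ w < ℓ (s i * w) → star (s i) w = s i * w)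
    (hslt' : ∀ (i : B) (w : W), ℓ (w * s i) < ℓ w → star w (s i) = w)
    {K : Set B} {z : W} (hz : ∀ k ∈ K, cs.IsRightDescent z k) {t : W}
    (ht : cs.IsParabolicReflection K t) : cs.IsRightInversion z t := by
  set H := Subgroup.closure (cs.simple '' K)
  -- `z = z₀ * c'⁻¹` with `z₀` minimal in `z W_K`; then `c'⁻¹` is the longest element
  -- of `W_K`, and the parabolic inversions of `z` are those of `c'⁻¹`
  obtain ⟨c', hc', hmin⟩ :=
    (InvImage.wf (fun c => ℓ (z * c)) wellFounded_lt).has_min H ⟨1, one_mem H⟩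
  set z₀ := z * c'
  have hz₀ : ∀ d ∈ H, ℓ z₀ ≤ ℓ (z₀ * d) := fun d hd => by
    simpa [InvImage, z₀, mul_assoc] using hmin (c' * d) (mul_mem hc' hd)
  have hzc : z = z₀ * c'⁻¹ := by simp [z₀]
  have hc : c'⁻¹ ∈ H := inv_mem hc'
  have hcdesc : ∀ k ∈ K, cs.IsRightDescent c'⁻¹ k := fun k hk => by
    have := cs.isRightInversion_mul_iff_of_minimal hz₀ hc (cs.isParabolicReflection_simple hk)
    rw [← hzc, isRightInversion_simple_iff_isRightDescent,
      isRightInversion_simple_iff_isRightDescent] at this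
    exact this.mp (hz k hk)
  rw [hzc, cs.isRightInversion_mul_iff_of_minimal hz₀ hc ht]
  have hlongest := cs.length_le_of_forall_isRightDescent star hassoc honeL honeR hslt hsgt hslt'
    hcdesc (mul_mem hc ht.mem_closure)
  exact ⟨ht.isReflection, hlongest.lt_of_ne (ht.isReflection.length_mul_left_ne _)⟩

end HeckeMonoid

end CoxeterSystem

theorem stmt17_general {B W : Type} [Group W] {M : CoxeterMatrix B} (cs : CoxeterSystem M W)
    -- the Hecke monoid product on `W`
    (star : W → W → W)
    (hassoc : ∀ x y z : W, star (star x y) z = star x (star y z))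
    (honeL : ∀ w : W, star 1 w = w) (honeR : ∀ w : W, star w 1 = w)
    (hslt : ∀ (i : B) (w : W), cs.length (cs.simple i * w) < cs.length w →
      star (cs.simple i) w = w)
    (hsgt : ∀ (i : B) (w : W), cs.length w < cs.length (cs.simple i * w) →
      star (cs.simple i) w = cs.simple i * w)
    (hslt' : ∀ (i : B) (w : W), cs.length (w * cs.simple i) < cs.length w →
      star w (cs.simple i) = w)
    (hsgt' : ∀ (i : B) (w : W), cs.length w < cs.length (w * cs.simple i) →
      star w (cs.simple i) = w * cs.simple i)
    (I K : Set B)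
    (WI WJ WK : Subgroup W)
    (hWI : WI = Subgroup.closure (cs.simple '' I))
    (hWK : WK = Subgroup.closure (cs.simple '' K))
    (x y : W)
    (hx : ∀ u ∈ (WI : Set W) * {x} * (WJ : Set W), cs.length u ≤ cs.length x)
    (hy : ∀ u ∈ (WJ : Set W) * {y} * (WK : Set W), cs.length u ≤ cs.length y) :
    ∀ u ∈ (WI : Set W) * {star x y} * (WK : Set W), cs.length u ≤ cs.length (star x y) := by
  subst hWI hWK
  have hxI : ∀ i ∈ I, cs.IsLeftDescent x i := fun i hi =>
    (hx _ ⟨_, ⟨_, Subgroup.subset_closure ⟨i, hi, rfl⟩, x, rfl, rfl⟩, 1, one_mem WJ,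
      mul_one _⟩).lt_of_ne (cs.length_simple_mul_ne x i)
  have hyK : ∀ k ∈ K, cs.IsRightDescent y k := fun k hk =>
    (hy _ ⟨_, ⟨1, one_mem WJ, y, rfl, one_mul y⟩, _, Subgroup.subset_closure ⟨k, hk, rfl⟩,
      rfl⟩).lt_of_ne (cs.length_mul_simple_ne y k)
  have hzI : ∀ i ∈ I, cs.IsRightDescent (star x y)⁻¹ i := fun i hi =>
    cs.isRightDescent_inv_iff.mpr (cs.isLeftDescent_of_simple_star_eq star hsgt
      (by rw [← hassoc, hslt i x (hxI i hi)]))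
  have hzK : ∀ k ∈ K, cs.IsRightDescent (star x y) k := fun k hk =>
    cs.isRightDescent_of_star_simple_eq star hsgt' (by rw [hassoc, hslt' k y (hyK k hk)])
  rintro _ ⟨_, ⟨a, ha, _, rfl, rfl⟩, c, hc, rfl⟩
  exact cs.length_mul_mul_le_of_isParabolicReflection
    (fun _ => cs.isRightInversion_of_isParabolicReflection star hassoc honeL honeR hslt hsgt
      hslt' hzI)
    (fun _ => cs.isRightInversion_of_isParabolicReflection star hassoc honeL honeR hslt hsgt
      hslt' hzK)
    ha hc

/-- In the Hecke monoid `(W,*)` of a Coxeter system, if `I, J, K` are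
finitary subsets of `S`, `x` is the longest element of its double coset `W_I x W_J` and
`y` is the longest element of its double coset `W_J y W_K`, then `x * y` is the longest
element of the double coset `W_I (x*y) W_K`. -/
theorem stmt17 {B W : Type} [Group W] {M : CoxeterMatrix B} (cs : CoxeterSystem M W)
    -- the Hecke monoid product on `W`
    (star : W → W → W)
    (hassoc : ∀ x y z : W, star (star x y) z = star x (star y z))
    (honeL : ∀ w : W, star 1 w = w) (honeR : ∀ w : W, star w 1 = w)
    (hslt : ∀ (i : B) (w : W), cs.length (cs.simple i * w) < cs.length w →
      star (cs.simple i) w = w)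
    (hsgt : ∀ (i : B) (w : W), cs.length w < cs.length (cs.simple i * w) →
      star (cs.simple i) w = cs.simple i * w)
    (hslt' : ∀ (i : B) (w : W), cs.length (w * cs.simple i) < cs.length w →
      star w (cs.simple i) = w)
    (hsgt' : ∀ (i : B) (w : W), cs.length w < cs.length (w * cs.simple i) →
      star w (cs.simple i) = w * cs.simple i)
    (I J K : Set B)
    (WI WJ WK : Subgroup W)
    (hWI : WI = Subgroup.closure (cs.simple '' I))
    (hWJ : WJ = Subgroup.closure (cs.simple '' J))
    (hWK : WK = Subgroup.closure (cs.simple '' K))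
    (hfinI : Set.Finite (WI : Set W)) (hfinJ : Set.Finite (WJ : Set W))
    (hfinK : Set.Finite (WK : Set W))
    (x y : W)
    (hx : ∀ u ∈ (WI : Set W) * {x} * (WJ : Set W), cs.length u ≤ cs.length x)
    (hy : ∀ u ∈ (WJ : Set W) * {y} * (WK : Set W), cs.length u ≤ cs.length y) :
    ∀ u ∈ (WI : Set W) * {star x y} * (WK : Set W), cs.length u ≤ cs.length (star x y) :=
  stmt17_general cs star hassoc honeL honeR hslt hsgt hslt' hsgt' I K WI WJ WK hWI hWK x y hx hy
end
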